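/- arXiv:1210.0112 — 6 statements merged into one kernel-verified Lean document; each statement's English description precedes it below -/
import Mathlib

section
/- Let f, g : [0,1] → [0,1] be continuous maps with f(0)=0, g(1)=1, 0<f(x)<x for x≠0, x<g(x)<1 for x≠1, and f, g orientation-preserving homeomorphisms onto their images. Let ⟨f,g⟩₊ be the semigroup of all finite compositions of f and g, and for x ∈ I let O₊(x) = {φ(x) : φ ∈ ⟨f,g⟩₊}. Then for every x ∈ I, the closure of O₊(0) is contained in the closure of O₊(x). -/
def unitI : Set ℝ := Set.Icc 0 1

def memC (f g : ℝ → ℝ) : Prop :=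
  ContinuousOn f unitI ∧ ContinuousOn g unitI ∧
  Set.MapsTo f unitI unitI ∧ Set.MapsTo g unitI unitI ∧
  f 0 = 0 ∧ g 1 = 1 ∧
  (∀ x ∈ unitI, x ≠ 0 → 0 < f x ∧ f x < x) ∧
  (∀ x ∈ unitI, x ≠ 1 → x < g x ∧ g x < 1) ∧
  StrictMonoOn f unitI ∧ StrictMonoOn g unitI

def orbit (f g : ℝ → ℝ) (x : ℝ) : Set ℝ :=
  { y | ∃ w : List (ℝ → ℝ), w ≠ [] ∧ (∀ h ∈ w, h = f ∨ h = g) ∧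
        y = w.foldl (fun a h => h a) x }

/-!
Since `0 < f y < y` away from `0`, the iterates `fⁿ x` decrease to the only fixed point `0` of
`f`. Every point `w 0` of `O₊(0)` is therefore the limit of `w (fⁿ x) ∈ O₊(x)`, by continuity of
the word `w`.
-/

open Filter Topology Set Function

theorem isFixedPt_of_tendsto_iterate_of_continuousWithinAt {α : Type*} [TopologicalSpace α]
    [T2Space α] {f : α → α} {s : Set α} {x y : α}
    (hy : Tendsto (fun n => f^[n] x) atTop (𝓝 y)) (hxs : ∀ n, f^[n] x ∈ s)
    (hf : ContinuousWithinAt f s y) : IsFixedPt f y := by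
  refine tendsto_nhds_unique ((tendsto_add_atTop_iff_nat 1).1 ?_) hy
  simp only [iterate_succ' f]
  exact hf.tendsto.comp (tendsto_nhdsWithin_iff.2 ⟨hy, Eventually.of_forall hxs⟩)

theorem tendsto_iterate_of_le_self {α : Type*} [ConditionallyCompleteLinearOrder α]
    [TopologicalSpace α] [OrderTopology α] {f : α → α} {s : Set α} {a x : α}
    (hs : IsClosed s) (hbdd : BddBelow s) (hmaps : MapsTo f s s) (hcont : ContinuousOn f s)
    (hle : ∀ y ∈ s, f y ≤ y) (hfix : ∀ y ∈ s, f y = y → y = a) (hx : x ∈ s) :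
    Tendsto (fun n => f^[n] x) atTop (𝓝 a) := by
  have hmem : ∀ n, f^[n] x ∈ s := fun n => hmaps.iterate n hx
  have hanti : Antitone fun n => f^[n] x := antitone_nat_of_succ_le fun n => by
    rw [iterate_succ_apply']
    exact hle _ (hmem n)
  have hlim := tendsto_atTop_ciInf hanti (hbdd.mono (range_subset_iff.2 hmem))
  have hL : (⨅ n, f^[n] x) ∈ s := hs.mem_of_tendsto hlim (Eventually.of_forall hmem)
  rwa [hfix _ hL (isFixedPt_of_tendsto_iterate_of_continuousWithinAt hlim hmem (hcont _ hL))]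
    at hlim

namespace List

variable {α : Type*}

theorem foldl_apply_replicate (f : α → α) (n : ℕ) (x : α) :
    (replicate n f).foldl (fun a h => h a) x = f^[n] x := by
  induction n generalizing x with
  | zero => rfl
  | succ n ih => rw [replicate_succ, foldl_cons, ih, iterate_succ_apply]

theorem mapsTo_foldl_apply {s : Set α} (w : List (α → α)) (hw : ∀ h ∈ w, MapsTo h s s) :
    MapsTo (fun t => w.foldl (fun a h => h a) t) s s := by
  induction w with
  | nil => exact mapsTo_id s
  | cons h w ih =>
    exact (ih fun h' hh' => hw h' (mem_cons_of_mem h hh')).comp (hw h mem_cons_self)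

theorem continuousOn_foldl_apply [TopologicalSpace α] {s : Set α} (w : List (α → α))
    (hw : ∀ h ∈ w, ContinuousOn h s ∧ MapsTo h s s) :
    ContinuousOn (fun t => w.foldl (fun a h => h a) t) s := by
  induction w with
  | nil => exact continuousOn_id
  | cons h w ih =>
    obtain ⟨hc, hm⟩ := hw h mem_cons_self
    exact (ih fun h' hh' => hw h' (mem_cons_of_mem h hh')).comp hc hm

end List

theorem orbit_iterate_subset (f g : ℝ → ℝ) (x : ℝ) (n : ℕ) :
    orbit f g (f^[n] x) ⊆ orbit f g x := by
  rintro y ⟨w, hne, hw, rfl⟩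
  refine ⟨List.replicate n f ++ w, by simp [hne], ?_, ?_⟩
  · simp only [List.mem_append, List.mem_replicate]
    rintro h (⟨-, rfl⟩ | hh)
    exacts [Or.inl rfl, hw h hh]
  · rw [List.foldl_append, List.foldl_apply_replicate]

theorem orbit_subset_closure_orbit_of_tendsto_iterate {f g : ℝ → ℝ} {s : Set ℝ}
    (hfc : ContinuousOn f s) (hgc : ContinuousOn g s) (hfs : MapsTo f s s) (hgs : MapsTo g s s)
    {x z : ℝ} (hx : x ∈ s) (hz : z ∈ s) (hlim : Tendsto (fun n => f^[n] x) atTop (𝓝 z)) :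
    orbit f g z ⊆ closure (orbit f g x) := by
  rintro y ⟨w, hne, hw, rfl⟩
  have hws : ∀ h ∈ w, ContinuousOn h s ∧ MapsTo h s s := fun h hh => by
    rcases hw h hh with rfl | rfl
    exacts [⟨hfc, hfs⟩, ⟨hgc, hgs⟩]
  have hlim_s : Tendsto (fun n => f^[n] x) atTop (𝓝[s] z) :=
    tendsto_nhdsWithin_iff.2 ⟨hlim, Eventually.of_forall fun n => hfs.iterate n hx⟩
  refine mem_closure_of_tendsto ((w.continuousOn_foldl_apply hws z hz).tendsto.comp hlim_s) ?_
  exact Eventually.of_forall fun n => orbit_iterate_subset f g x n ⟨w, hne, hw, rfl⟩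

theorem closure_orbit_zero_subset (f g : ℝ → ℝ) (h : memC f g) :
    ∀ x ∈ unitI, closure (orbit f g 0) ⊆ closure (orbit f g x) := by
  obtain ⟨hfc, hgc, hfm, hgm, hf0, -, hfx, -⟩ := h
  intro x hx
  have hle : ∀ y ∈ unitI, f y ≤ y := fun y hy => by
    rcases eq_or_ne y 0 with rfl | hy0
    · rw [hf0]
    · exact (hfx y hy hy0).2.le
  have hfix : ∀ y ∈ unitI, f y = y → y = 0 := fun y hy hfy => by
    by_contra hy0
    exact (hfx y hy hy0).2.ne hfy
  have hlim : Tendsto (fun n => f^[n] x) atTop (𝓝 0) :=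
    tendsto_iterate_of_le_self isClosed_Icc bddBelow_Icc hfm hfc hle hfix hx
  exact closure_minimal (orbit_subset_closure_orbit_of_tendsto_iterate hfc hgc hfm hgm hx
    ⟨le_rfl, zero_le_one⟩ hlim) isClosed_closure
end

section
/- Let (f,g) ∈ 𝒞 (i.e., f,g : [0,1] → [0,1] continuous, f(0)=0, g(1)=1, 0<f(x)<x for x≠0, x<g(x)<1 for x≠1, both orientation-preserving homeomorphisms onto their images). Then the closure of the forward orbit O₊(0) is a minimal set for the semigroup action: for every y in the closure of O₊(0), the closure of O₊(y) equals the closure of O₊(0). -/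
open Set Filter Topology

lemma List.foldl_apply_mem_of_mapsTo {α : Type*} {f g : α → α} {T : Set α}
    (hf : MapsTo f T T) (hg : MapsTo g T T) :
    ∀ {w : List (α → α)}, (∀ h ∈ w, h = f ∨ h = g) →
      ∀ {x : α}, x ∈ T → w.foldl (fun a h => h a) x ∈ T
  | [], _, _, hx => hx
  | h :: w, hw, _, hx => by
    have hh : MapsTo h T T := by
      rcases hw h List.mem_cons_self with rfl | rfl
      exacts [hf, hg]
    exact List.foldl_apply_mem_of_mapsTo hf hg (fun k hk => hw k (List.mem_cons_of_mem h hk))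
      (hh hx)

section Orbit

variable {f g : ℝ → ℝ}

lemma orbit_subset_of_mapsTo {T : Set ℝ} (hf : MapsTo f T T) (hg : MapsTo g T T) {x : ℝ}
    (hx : x ∈ T) : orbit f g x ⊆ T := by
  rintro _ ⟨w, -, hw, rfl⟩
  exact List.foldl_apply_mem_of_mapsTo hf hg hw hx

lemma mapsTo_orbit_of_eq {k : ℝ → ℝ} (hk : k = f ∨ k = g) (x : ℝ) :
    MapsTo k (orbit f g x) (orbit f g x) := by
  rintro _ ⟨w, hw, hwfg, rfl⟩
  refine ⟨w ++ [k], by simp, ?_, by simp⟩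
  simpa [or_imp, forall_and] using And.intro hwfg hk

lemma iterate_succ_mem_orbit (n : ℕ) (x : ℝ) : f^[n + 1] x ∈ orbit f g x := by
  refine ⟨List.replicate (n + 1) f, by simp, fun h hh => .inl (List.eq_of_mem_replicate hh), ?_⟩
  induction n generalizing x with
  | zero => simp
  | succ n ih => rw [List.replicate_succ, List.foldl_cons, ← ih, Function.iterate_succ_apply]

lemma mapsTo_closure_orbit {S : Set ℝ} (hS : IsClosed S) {k : ℝ → ℝ} (hk : k = f ∨ k = g)
    (hkc : ContinuousOn k S) (hf : MapsTo f S S) (hg : MapsTo g S S) {z : ℝ} (hz : z ∈ S) :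
    MapsTo k (closure (orbit f g z)) (closure (orbit f g z)) :=
  (mapsTo_orbit_of_eq hk z).closure_of_continuousOn <|
    hkc.mono (closure_minimal (orbit_subset_of_mapsTo hf hg hz) hS)

lemma closure_orbit_subset_of_mem_closure {S : Set ℝ} (hS : IsClosed S)
    (hfc : ContinuousOn f S) (hgc : ContinuousOn g S) (hf : MapsTo f S S) (hg : MapsTo g S S)
    {x z : ℝ} (hz : z ∈ S) (hx : x ∈ closure (orbit f g z)) :
    closure (orbit f g x) ⊆ closure (orbit f g z) :=
  closure_minimal (orbit_subset_of_mapsTo (mapsTo_closure_orbit hS (.inl rfl) hfc hf hg hz)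
    (mapsTo_closure_orbit hS (.inr rfl) hgc hf hg hz) hx) isClosed_closure

end Orbit

lemma tendsto_iterate_zero {f : ℝ → ℝ} (hfc : ContinuousOn f unitI) (hf : MapsTo f unitI unitI)
    (hf0 : f 0 = 0) (hlt : ∀ x ∈ unitI, x ≠ 0 → f x < x) {y : ℝ} (hy : y ∈ unitI) :
    Tendsto (fun n => f^[n] y) atTop (𝓝 0) := by
  set a : ℕ → ℝ := fun n => f^[n] y
  have hmem : ∀ n, a n ∈ unitI := fun n => hf.iterate n hy
  have hsucc : ∀ n, a (n + 1) = f (a n) := fun n => Function.iterate_succ_apply' f n y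
  have hanti : Antitone a := antitone_nat_of_succ_le fun n => by
    rw [hsucc]
    rcases eq_or_ne (a n) 0 with h0 | h0
    · rw [h0, hf0]
    · exact (hlt _ (hmem n) h0).le
  have htend : Tendsto a atTop (𝓝 (⨅ n, a n)) :=
    tendsto_atTop_ciInf hanti ⟨0, by rintro _ ⟨n, rfl⟩; exact (hmem n).1⟩
  set L := ⨅ n, a n
  have hL : L ∈ unitI := isClosed_Icc.mem_of_tendsto htend (.of_forall hmem)
  have hfix : f L = L := by
    refine tendsto_nhds_unique ?_ ((tendsto_add_atTop_iff_nat 1).2 htend)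
    simp only [hsucc]
    exact (hfc L hL).tendsto.comp
      (tendsto_nhdsWithin_of_tendsto_nhds_of_eventually_within a htend (.of_forall hmem))
  have hL0 : L = 0 := by
    by_contra hne
    exact (hlt L hL hne).ne hfix
  exact hL0 ▸ htend

theorem closure_orbit_zero_minimal (f g : ℝ → ℝ) (h : memC f g) :
    ∀ y ∈ closure (orbit f g 0), closure (orbit f g y) = closure (orbit f g 0) := by
  obtain ⟨hfc, hgc, hf, hg, hf0, -, hlt, -⟩ := h
  have hsub : ∀ {x z : ℝ}, z ∈ unitI → x ∈ closure (orbit f g z) →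
      closure (orbit f g x) ⊆ closure (orbit f g z) :=
    closure_orbit_subset_of_mem_closure isClosed_Icc hfc hgc hf hg
  intro y hy
  have hyI : y ∈ unitI :=
    closure_minimal (orbit_subset_of_mapsTo hf hg ⟨le_rfl, zero_le_one⟩) isClosed_Icc hy
  have h0 : (0 : ℝ) ∈ closure (orbit f g y) :=
    mem_closure_of_tendsto
      ((tendsto_iterate_zero hfc hf hf0 (fun x hx hx0 => (hlt x hx hx0).2) hyI).comp
        (tendsto_add_atTop_nat 1))
      (.of_forall fun n => iterate_succ_mem_orbit n y)
  exact (hsub ⟨le_rfl, zero_le_one⟩ hy).antisymm (hsub hyI h0)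
end

section
/- Let (f,g) ∈ 𝒞 and let 𝒦 ⊆ [0,1] be a hiding region for (f,g), i.e., a proper nonempty subset of [0,1] that is a locally finite disjoint union of closed intervals with nonempty interior, satisfying 𝒦 ∩ f([0,1]) ⊆ f(𝒦) and 𝒦 ∩ g([0,1]) ⊆ g(𝒦). Then 0 ∉ 𝒦 and 1 ∉ 𝒦. -/
def IsRegion (K : Set ℝ) : Prop :=
  ∃ S : Finset (ℝ × ℝ), S.Nonempty ∧ (∀ p ∈ S, p.1 < p.2) ∧
    (∀ p ∈ S, ∀ q ∈ S, p ≠ q → Disjoint (Set.Icc p.1 p.2) (Set.Icc q.1 q.2)) ∧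
    K = ⋃ p ∈ S, Set.Icc p.1 p.2

def IsHidingRegion (f g : ℝ → ℝ) (K : Set ℝ) : Prop :=
  IsRegion K ∧ K ⊆ unitI ∧ K ≠ unitI ∧
  K ∩ f '' unitI ⊆ f '' K ∧ K ∩ g '' unitI ⊆ g '' K

open Set Filter Topology

/-!
Pulling back along `f` keeps points in a hiding region `K`: if `f x ∈ K` then `f x = f k` for
some `k ∈ K`, and injectivity gives `x = k`. If `0 ∈ K`, then `K` contains an interval `[0, c]`,
and since `f` has no fixed point in `[0, 1]` other than `0`, every orbit `f^[n] x` descends into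
`[0, c]`. Pulling back along the orbit gives `[0, 1] ⊆ K`, contradicting `K ≠ [0, 1]`. The case
`1 ∈ K` is the same argument for `g` in the reversed order.
-/

section Iterate

variable {α : Type*} [ConditionallyCompleteLinearOrder α] [TopologicalSpace α] [OrderTopology α]
  {f : α → α} {s : Set α} {a x : α}

theorem tendsto_iterate_of_map_le (hs : IsClosed s) (hbdd : BddBelow s) (hmaps : MapsTo f s s)
    (hf : ContinuousOn f s) (hle : ∀ y ∈ s, f y ≤ y) (hfix : ∀ y ∈ s, f y = y → y = a)
    (hx : x ∈ s) : Tendsto (fun n => f^[n] x) atTop (𝓝 a) := by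
  have hmem : ∀ n, f^[n] x ∈ s := fun n => hmaps.iterate n hx
  have hanti : Antitone fun n => f^[n] x := antitone_nat_of_succ_le fun n => by
    rw [Function.iterate_succ_apply']
    exact hle _ (hmem n)
  set L := ⨅ n, f^[n] x
  have hlim : Tendsto (fun n => f^[n] x) atTop (𝓝 L) :=
    tendsto_atTop_ciInf hanti (hbdd.mono (range_subset_iff.2 hmem))
  have hLs : L ∈ s := hs.mem_of_tendsto hlim (Eventually.of_forall hmem)
  have hfL : Tendsto (fun n => f (f^[n] x)) atTop (𝓝 (f L)) :=
    (hf L hLs).tendsto.comp (tendsto_nhdsWithin_iff.2 ⟨hlim, Eventually.of_forall hmem⟩)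
  have hshift : Tendsto (fun n => f (f^[n] x)) atTop (𝓝 L) := by
    simpa only [Function.iterate_succ_apply'] using (tendsto_add_atTop_iff_nat 1).2 hlim
  rwa [← hfix L hLs (tendsto_nhds_unique hfL hshift)]

end Iterate

theorem subset_of_inter_image_subset_of_tendsto_iterate {X : Type*} [TopologicalSpace X]
    {f : X → X} {s K : Set X} {a : X} (hmaps : MapsTo f s s) (hinj : InjOn f s) (hKs : K ⊆ s)
    (hKf : K ∩ f '' s ⊆ f '' K) (hK : K ∈ 𝓝[s] a)
    (htend : ∀ x ∈ s, Tendsto (fun n => f^[n] x) atTop (𝓝 a)) : s ⊆ K := by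
  have hpull : ∀ n, ∀ x ∈ s, f^[n] x ∈ K → x ∈ K := by
    intro n
    induction n with
    | zero => exact fun x _ hx => hx
    | succ n ih =>
      intro x hx hnx
      rw [Function.iterate_succ_apply] at hnx
      exact hinj.mem_of_mem_image hKs hx (hKf ⟨ih _ (hmaps hx) hnx, mem_image_of_mem f hx⟩)
  intro x hx
  have hev : ∀ᶠ n in atTop, f^[n] x ∈ K :=
    (tendsto_nhdsWithin_iff.2 ⟨htend x hx, Eventually.of_forall fun n => hmaps.iterate n hx⟩) hK
  obtain ⟨n, hn⟩ := hev.exists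
  exact hpull n x hx hn

namespace IsRegion

variable {K : Set ℝ} {x : ℝ}

theorem exists_Icc_subset (hK : IsRegion K) (hx : x ∈ K) :
    ∃ a b, a < b ∧ x ∈ Icc a b ∧ Icc a b ⊆ K := by
  obtain ⟨S, -, hlt, -, rfl⟩ := hK
  obtain ⟨p, hp, hxp⟩ := mem_iUnion₂.1 hx
  exact ⟨p.1, p.2, hlt p hp, hxp, subset_biUnion_of_mem (u := fun p : ℝ × ℝ => Icc p.1 p.2) hp⟩

theorem mem_nhdsGE (hK : IsRegion K) (hx : x ∈ K) (hKx : K ⊆ Ici x) : K ∈ 𝓝[≥] x := by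
  obtain ⟨a, b, hab, hxab, habK⟩ := hK.exists_Icc_subset hx
  obtain rfl : a = x := le_antisymm hxab.1 (hKx (habK ⟨le_rfl, hab.le⟩))
  exact mem_of_superset (Icc_mem_nhdsGE hab) habK

theorem mem_nhdsLE (hK : IsRegion K) (hx : x ∈ K) (hKx : K ⊆ Iic x) : K ∈ 𝓝[≤] x := by
  obtain ⟨a, b, hab, hxab, habK⟩ := hK.exists_Icc_subset hx
  obtain rfl : b = x := le_antisymm (hKx (habK ⟨hab.le, le_rfl⟩)) hxab.2
  exact mem_of_superset (Icc_mem_nhdsLE hab) habK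

end IsRegion

namespace memC

variable {f g : ℝ → ℝ} {x : ℝ}

theorem tendsto_iterate_left (h : memC f g) (hx : x ∈ unitI) :
    Tendsto (fun n => f^[n] x) atTop (𝓝 0) := by
  obtain ⟨hfc, -, hfm, -, hf0, -, hflt, -⟩ := h
  refine tendsto_iterate_of_map_le isClosed_Icc bddBelow_Icc hfm hfc (fun y hy => ?_)
    (fun y hy hfy => ?_) hx
  · rcases eq_or_ne y 0 with rfl | hy0
    · exact hf0.le
    · exact (hflt y hy hy0).2.le
  · by_contra hy0
    exact (hflt y hy hy0).2.ne hfy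

theorem tendsto_iterate_right (h : memC f g) (hx : x ∈ unitI) :
    Tendsto (fun n => g^[n] x) atTop (𝓝 1) := by
  obtain ⟨-, hgc, -, hgm, -, hg1, -, hggt, -⟩ := h
  refine tendsto_iterate_of_map_le (α := ℝᵒᵈ) (s := unitI) (isClosed_Icc : IsClosed unitI)
    (bddAbove_Icc : BddAbove unitI) hgm hgc (fun y hy => ?_) (fun y hy hgy => ?_) hx
  · rcases eq_or_ne y 1 with rfl | hy1
    · exact hg1.ge
    · exact (hggt y hy hy1).1.le
  · by_contra hy1
    exact (hggt y hy hy1).1.ne' hgy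

end memC

theorem hiding_region_not_mem_endpoints (f g : ℝ → ℝ) (K : Set ℝ)
    (h : memC f g) (hK : IsHidingRegion f g K) :
    (0 : ℝ) ∉ K ∧ (1 : ℝ) ∉ K := by
  obtain ⟨hreg, hKI, hKne, hKf, hKg⟩ := hK
  obtain ⟨-, -, hfm, hgm, -, -, -, -, hfs, hgs⟩ := id h
  refine ⟨fun h0 => hKne (hKI.antisymm ?_), fun h1 => hKne (hKI.antisymm ?_)⟩
  · have hnhds : K ∈ 𝓝[unitI] 0 :=
      nhdsWithin_mono _ (fun x hx => hx.1) (hreg.mem_nhdsGE h0 fun x hx => (hKI hx).1)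
    exact subset_of_inter_image_subset_of_tendsto_iterate hfm hfs.injOn hKI hKf hnhds
      fun x hx => h.tendsto_iterate_left hx
  · have hnhds : K ∈ 𝓝[unitI] 1 :=
      nhdsWithin_mono _ (fun x hx => hx.2) (hreg.mem_nhdsLE h1 fun x hx => (hKI hx).2)
    exact subset_of_inter_image_subset_of_tendsto_iterate hgm hgs.injOn hKI hKg hnhds
      fun x hx => h.tendsto_iterate_right hx
end

section
/- For every integer n ≥ 3 there exists an n-template: a finite disjoint union 𝒯 = ⨿ T_i of closed intervals with nonempty interior contained in (0, n), ordered increasingly, such that (1) T_m (the last interval) is the only interval contained in (n−1, n); (2) T₀ is the only interval contained in (0,1); (3) for every i ≤ m−1 there exists i' with T_i ⊆ f(T_{i'}), where f(x) = (1−1/n)x; and (4) for every i ≤ m−1 there exists i' with T_i ⊆ g(T_{i'}), where g(x) = x − 1. -/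
/-!
Pick an irrational seed `h ∈ (1 - 1/n, 1)` and close `{h}` under `x ↦ x + 1` and
`x ↦ x · n/(n-1)` (the inverses of `g` and `f`), applied only to points below `n - 1`. Every step
raises a point by at least `1/n` and all points stay below `n`, so the closure `O` is finite. Its
points are irrational, hence different from `n - 1`, and all of them but `h` exceed `1`.
If `δ > 0` is at most every gap of `O ∪ {1, n - 1, n}`, put the interval `[v(1 - c), v(1 + c)]`,
`c = δ/(4n)`, around each `v ∈ O` below `n - 1`, and one interval `[n - 1 + δ/4, n - δ/4]`
for the points above `n - 1`. Because the radius is relative, `f` maps the interval of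
`v · n/(n-1)` exactly onto that of `v`, and `g` maps the interval of `v + 1` onto a superset of
that of `v`.
-/

open Set

noncomputable section

namespace Template

variable {n : ℕ}

def scale (n : ℕ) : ℝ := n / (n - 1)

lemma natCast_sub_one_pos (hn : 2 ≤ n) : (0 : ℝ) < n - 1 := by
  have : (2 : ℝ) ≤ n := by exact_mod_cast hn
  linarith

lemma sub_one_mul_scale (hn : 2 ≤ n) : ((n : ℝ) - 1) * scale n = n :=
  mul_div_cancel₀ _ (natCast_sub_one_pos hn).ne'

lemma one_sub_inv_mul_scale (hn : 2 ≤ n) : (1 - 1 / (n : ℝ)) * scale n = 1 := by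
  have := natCast_sub_one_pos hn
  rw [scale]
  field_simp

lemma one_le_scale (hn : 2 ≤ n) : 1 ≤ scale n := by
  rw [scale, one_le_div (natCast_sub_one_pos hn)]
  linarith

lemma scale_pos (hn : 2 ≤ n) : 0 < scale n := zero_lt_one.trans_le (one_le_scale hn)

lemma scale_eq_ratCast : scale n = ((n / (n - 1) : ℚ) : ℝ) := by
  simp [scale]

lemma _root_.List.head?_eq_of_pairwise_lt {α : Type*} [Preorder α] {l : List α} {a : α}
    (hl : l.Pairwise (· < ·)) (ha : a ∈ l) (hmin : ∀ b ∈ l, a ≤ b) : l.head? = some a := by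
  cases l with
  | nil => simp at ha
  | cons b t =>
    rcases List.mem_cons.mp ha with rfl | ha
    · rfl
    · exact absurd (hmin b List.mem_cons_self) (List.rel_of_pairwise_cons hl ha).not_ge

lemma _root_.Finset.exists_pos_forall_le_dist {α : Type*} [MetricSpace α] (s : Finset α) :
    ∃ δ > 0, ∀ x ∈ s, ∀ y ∈ s, x ≠ y → δ ≤ dist x y := by
  by_cases hs : (s : Set α).Nontrivial
  · exact ⟨_, s.infsep_pos_iff_nontrivial.mpr hs,
      fun x hx y hy hxy => Set.infsep_le_dist_of_mem hx hy hxy⟩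
  · exact ⟨1, one_pos, fun x hx y hy hxy => absurd ⟨x, hx, y, hy, hxy⟩ hs⟩

lemma Icc_subset_image_of_leftInverse {φ ψ : ℝ → ℝ} (hφψ : Function.LeftInverse φ ψ)
    (hψ : Monotone ψ) {a b c d : ℝ} (h : Icc (ψ a) (ψ b) ⊆ Icc c d) :
    Icc a b ⊆ φ '' Icc c d :=
  fun x hx => ⟨ψ x, h ⟨hψ hx.1, hψ hx.2⟩, hφψ x⟩

def level (n : ℕ) (h : ℝ) : ℕ → Finset ℝ
  | 0 => {h}
  | k + 1 => ((level n h k).filter (· < (n : ℝ) - 1)).image (· + 1) ∪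
      ((level n h k).filter (· < (n : ℝ) - 1)).image (· * scale n)

lemma level_induction {h : ℝ} {P : ℕ → ℝ → Prop} (h0 : P 0 h)
    (step : ∀ k u, P k u → u < n - 1 → P (k + 1) (u + 1) ∧ P (k + 1) (u * scale n)) :
    ∀ k, ∀ v ∈ level n h k, P k v := by
  intro k
  induction k with
  | zero => simpa [level] using h0
  | succ k ih =>
    simp only [level, Finset.mem_union, Finset.mem_image, Finset.mem_filter]
    rintro v (⟨u, ⟨hu, hlt⟩, rfl⟩ | ⟨u, ⟨hu, hlt⟩, rfl⟩)
    · exact (step k u (ih u hu) hlt).1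
    · exact (step k u (ih u hu) hlt).2

lemma add_one_mem_level {h v : ℝ} {k : ℕ} (hv : v ∈ level n h k) (hlt : v < n - 1) :
    v + 1 ∈ level n h (k + 1) := by
  simp only [level, Finset.mem_union, Finset.mem_image, Finset.mem_filter]
  exact Or.inl ⟨v, ⟨hv, hlt⟩, rfl⟩

lemma mul_scale_mem_level {h v : ℝ} {k : ℕ} (hv : v ∈ level n h k) (hlt : v < n - 1) :
    v * scale n ∈ level n h (k + 1) := by
  simp only [level, Finset.mem_union, Finset.mem_image, Finset.mem_filter]
  exact Or.inr ⟨v, ⟨hv, hlt⟩, rfl⟩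

lemma lt_of_mem_level (hn : 2 ≤ n) {h : ℝ} (h1 : h < 1) {k : ℕ} {v : ℝ}
    (hv : v ∈ level n h k) : v < n := by
  refine level_induction (P := fun _ v => v < n) ?_ (fun k u _ hu => ⟨?_, ?_⟩) k v hv
  · have : (2 : ℝ) ≤ n := by exact_mod_cast hn
    linarith
  · linarith
  · rw [← sub_one_mul_scale hn]
    exact mul_lt_mul_of_pos_right hu (scale_pos hn)

/-- Multiplying by `n/(n-1)` gains at least `1/n` because the points stay above `1 - 1/n`. -/
lemma le_of_mem_level (hn : 2 ≤ n) {h : ℝ} (hh : 1 - 1 / (n : ℝ) ≤ h) {k : ℕ} {v : ℝ}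
    (hv : v ∈ level n h k) : 1 - 1 / (n : ℝ) + k / n ≤ v := by
  have hn' : (1 : ℝ) ≤ n := by exact_mod_cast (by omega : 1 ≤ n)
  refine level_induction (P := fun k v => 1 - 1 / (n : ℝ) + k / n ≤ v) (by simpa using hh)
    (fun k u hu _ => ⟨?_, ?_⟩) k v hv
  · have : 1 / (n : ℝ) ≤ 1 := div_le_one_of_le₀ hn' (by positivity)
    push_cast
    linarith [add_div (k : ℝ) 1 n]
  · have hk : (0 : ℝ) ≤ k / n := by positivity
    have hgain : (1 - 1 / (n : ℝ)) * (scale n - 1) ≤ u * (scale n - 1) :=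
      mul_le_mul_of_nonneg_right (by linarith) (by linarith [one_le_scale hn])
    have := one_sub_inv_mul_scale hn
    push_cast
    nlinarith [add_div (k : ℝ) 1 n]

lemma lt_sq_of_mem_level (hn : 2 ≤ n) {h : ℝ} (hh : 1 - 1 / (n : ℝ) ≤ h) (h1 : h < 1)
    {k : ℕ} {v : ℝ} (hv : v ∈ level n h k) : k < n ^ 2 := by
  have hlow := le_of_mem_level hn hh hv
  have hup := lt_of_mem_level hn h1 hv
  have hpos : (0 : ℝ) < n := by positivity
  have : (k : ℝ) / n < n := by
    have : 0 ≤ 1 - 1 / (n : ℝ) := by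
      rw [sub_nonneg, div_le_one hpos]; exact_mod_cast (by omega : 1 ≤ n)
    linarith
  rw [div_lt_iff₀ hpos] at this
  exact_mod_cast (by nlinarith : (k : ℝ) < n ^ 2)

/-- The levels from `n ^ 2` on are empty (`lt_sq_of_mem_level`), so this is the whole forward
orbit of `h`. -/
def orbit (n : ℕ) (h : ℝ) : Finset ℝ := (Finset.range (n ^ 2)).biUnion (level n h)

lemma orbit_induction {h : ℝ} {P : ℝ → Prop} (h0 : P h)
    (step : ∀ u, P u → u < n - 1 → P (u + 1) ∧ P (u * scale n)) :
    ∀ v ∈ orbit n h, P v := by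
  intro v hv
  obtain ⟨k, -, hv⟩ := Finset.mem_biUnion.mp hv
  exact level_induction (P := fun _ => P) h0 (fun _ => step) k v hv

lemma mem_orbit_of_mem_level (hn : 2 ≤ n) {h : ℝ} (hh : 1 - 1 / (n : ℝ) ≤ h) (h1 : h < 1)
    {k : ℕ} {v : ℝ} (hv : v ∈ level n h k) : v ∈ orbit n h :=
  Finset.mem_biUnion.mpr ⟨k, Finset.mem_range.mpr (lt_sq_of_mem_level hn hh h1 hv), hv⟩

lemma seed_mem_orbit (hn : 2 ≤ n) (h : ℝ) : h ∈ orbit n h :=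
  Finset.mem_biUnion.mpr ⟨0, Finset.mem_range.mpr (by positivity), Finset.mem_singleton_self h⟩

lemma add_one_mem_orbit (hn : 2 ≤ n) {h : ℝ} (hh : 1 - 1 / (n : ℝ) ≤ h) (h1 : h < 1) {v : ℝ}
    (hv : v ∈ orbit n h) (hlt : v < n - 1) : v + 1 ∈ orbit n h := by
  obtain ⟨k, -, hv⟩ := Finset.mem_biUnion.mp hv
  exact mem_orbit_of_mem_level hn hh h1 (add_one_mem_level hv hlt)

lemma mul_scale_mem_orbit (hn : 2 ≤ n) {h : ℝ} (hh : 1 - 1 / (n : ℝ) ≤ h) (h1 : h < 1) {v : ℝ}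
    (hv : v ∈ orbit n h) (hlt : v < n - 1) : v * scale n ∈ orbit n h := by
  obtain ⟨k, -, hv⟩ := Finset.mem_biUnion.mp hv
  exact mem_orbit_of_mem_level hn hh h1 (mul_scale_mem_level hv hlt)

lemma lt_of_mem_orbit (hn : 2 ≤ n) {h : ℝ} (h1 : h < 1) {v : ℝ} (hv : v ∈ orbit n h) : v < n := by
  obtain ⟨k, -, hv⟩ := Finset.mem_biUnion.mp hv
  exact lt_of_mem_level hn h1 hv

lemma irrational_of_mem_orbit (hn : 2 ≤ n) {h : ℝ} (hh : Irrational h) :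
    ∀ v ∈ orbit n h, Irrational v := by
  have hq : ((n : ℚ) / (n - 1)) ≠ 0 := by
    have : (2 : ℚ) ≤ n := by exact_mod_cast hn
    exact div_ne_zero (by positivity) (by linarith)
  refine orbit_induction hh fun u hu _ => ⟨by exact_mod_cast hu.add_natCast 1, ?_⟩
  rw [scale_eq_ratCast]
  exact hu.mul_ratCast hq

lemma eq_or_one_lt_of_mem_orbit (hn : 2 ≤ n) {h : ℝ} (hh : 1 - 1 / (n : ℝ) < h) (h1 : h < 1) :
    ∀ v ∈ orbit n h, v = h ∨ 1 < v := by
  refine orbit_induction (Or.inl rfl) fun u hu _ => ?_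
  have hu : 1 - 1 / (n : ℝ) < u := by rcases hu with rfl | hu <;> linarith
  have hpos : 0 ≤ 1 - 1 / (n : ℝ) := by
    rw [sub_nonneg, div_le_one (by positivity)]; exact_mod_cast (by omega : 1 ≤ n)
  refine ⟨Or.inr (by linarith), Or.inr ?_⟩
  rw [← one_sub_inv_mul_scale hn]
  exact mul_lt_mul_of_pos_right hu (scale_pos hn)

structure IsAdmissible (n : ℕ) (O : Finset ℝ) (h δ : ℝ) : Prop where
  seed_mem : h ∈ O
  seed_pos : 0 < h
  one_lt : ∀ v ∈ O, v ≠ h → 1 < v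
  add_one_mem : ∀ v ∈ O, v < n - 1 → v + 1 ∈ O
  mul_scale_mem : ∀ v ∈ O, v < n - 1 → v * scale n ∈ O
  delta_pos : 0 < δ
  le_abs_sub : ∀ v ∈ O, ∀ w ∈ O, v ≠ w → δ ≤ |v - w|
  le_abs_sub_sub_one : ∀ v ∈ O, δ ≤ |v - (n - 1)|
  add_delta_le : ∀ v ∈ O, v + δ ≤ n
  seed_add_delta_le : h + δ ≤ 1

theorem exists_isAdmissible (hn : 2 ≤ n) : ∃ O h δ, IsAdmissible n O h δ := by
  have hn' : (2 : ℝ) ≤ n := by exact_mod_cast hn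
  obtain ⟨h, hirr, hh, h1⟩ :=
    exists_irrational_btwn (sub_lt_self 1 (by positivity : 0 < 1 / (n : ℝ)))
  have h0 : 0 < h := lt_of_le_of_lt (by rw [sub_nonneg, div_le_one (by positivity)]; linarith) hh
  set O := orbit n h
  set S : Finset ℝ := insert 1 (insert ((n : ℝ) - 1) (insert (n : ℝ) O))
  obtain ⟨δ, hδ, hsep⟩ := S.exists_pos_forall_le_dist
  simp only [Real.dist_eq] at hsep
  have hhO : h ∈ O := seed_mem_orbit hn h
  refine ⟨O, h, δ, hhO, h0, ?_, ?_, ?_, hδ, ?_, ?_, ?_, ?_⟩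
  · exact fun v hv hvh => (eq_or_one_lt_of_mem_orbit hn hh h1 v hv).resolve_left hvh
  · exact fun v hv hlt => add_one_mem_orbit hn hh.le h1 hv hlt
  · exact fun v hv hlt => mul_scale_mem_orbit hn hh.le h1 hv hlt
  · exact fun v hv w hw hvw => hsep v (by simp [S, hv]) w (by simp [S, hw]) hvw
  · refine fun v hv => hsep v (by simp [S, hv]) _ (by simp [S]) ?_
    simpa using (irrational_of_mem_orbit hn hirr v hv).ne_int ((n : ℤ) - 1)
  · intro v hv
    have hlt := lt_of_mem_orbit hn h1 hv
    have := hsep v (by simp [S, hv]) n (by simp [S]) hlt.ne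
    rw [abs_of_neg (by linarith)] at this
    linarith
  · have := hsep h (by simp [S, hhO]) 1 (by simp [S]) h1.ne
    rw [abs_of_neg (by linarith)] at this
    linarith

def radius (n : ℕ) (δ : ℝ) : ℝ := δ / (4 * n)

def piece (n : ℕ) (δ v : ℝ) : ℝ × ℝ := (v * (1 - radius n δ), v * (1 + radius n δ))

def topPiece (n : ℕ) (δ : ℝ) : ℝ × ℝ := (n - 1 + δ / 4, n - δ / 4)

def intervals (n : ℕ) (O : Finset ℝ) (δ : ℝ) : List (ℝ × ℝ) :=
  ((O.filter (· < (n : ℝ) - 1)).sort).map (piece n δ) ++ [topPiece n δ]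

lemma mem_intervals {O : Finset ℝ} {δ : ℝ} {p : ℝ × ℝ} :
    p ∈ intervals n O δ ↔ (∃ v ∈ O, v < n - 1 ∧ piece n δ v = p) ∨ p = topPiece n δ := by
  simp [intervals, and_assoc]

lemma intervals_getLast? (O : Finset ℝ) (δ : ℝ) :
    (intervals n O δ).getLast? = some (topPiece n δ) := by
  simp [intervals]

lemma exists_piece_eq_of_getLast?_ne {O : Finset ℝ} {δ : ℝ} {p : ℝ × ℝ}
    (hp : p ∈ intervals n O δ) (hlast : (intervals n O δ).getLast? ≠ some p) :
    ∃ v ∈ O, v < n - 1 ∧ piece n δ v = p :=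
  (mem_intervals.mp hp).resolve_right fun htop => hlast (htop ▸ intervals_getLast? O δ)

namespace IsAdmissible

variable {O : Finset ℝ} {h δ : ℝ}

lemma pos (hS : IsAdmissible n O h δ) {v : ℝ} (hv : v ∈ O) : 0 < v := by
  by_cases hvh : v = h
  · exact hvh ▸ hS.seed_pos
  · linarith [hS.one_lt v hv hvh]

lemma natCast_pos (hS : IsAdmissible n O h δ) : (0 : ℝ) < n := by
  linarith [hS.add_delta_le h hS.seed_mem, hS.seed_pos, hS.delta_pos]

lemma delta_lt_one (hS : IsAdmissible n O h δ) : δ < 1 := by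
  linarith [hS.seed_add_delta_le, hS.seed_pos]

lemma radius_pos (hS : IsAdmissible n O h δ) : 0 < radius n δ :=
  div_pos hS.delta_pos (by linarith [hS.natCast_pos])

lemma mul_radius_lt (hS : IsAdmissible n O h δ) {v : ℝ} (hv : v ∈ O) :
    v * radius n δ < δ / 4 := by
  have hN := hS.natCast_pos
  have : v * radius n δ = v / n * (δ / 4) := by
    rw [radius]; field_simp
  rw [this]
  have : v / n < 1 := (div_lt_one hN).mpr (by linarith [hS.add_delta_le v hv, hS.delta_pos])
  nlinarith [hS.delta_pos]

lemma piece_fst_lt (hS : IsAdmissible n O h δ) {v : ℝ} (hv : v ∈ O) :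
    v - δ / 4 < (piece n δ v).1 := by
  have := hS.mul_radius_lt hv
  simp only [piece]
  linarith

lemma piece_snd_lt (hS : IsAdmissible n O h δ) {v : ℝ} (hv : v ∈ O) :
    (piece n δ v).2 < v + δ / 4 := by
  have := hS.mul_radius_lt hv
  simp only [piece]
  linarith

lemma mem_Icc_piece (hS : IsAdmissible n O h δ) {v : ℝ} (hv : v ∈ O) :
    v ∈ Icc (piece n δ v).1 (piece n δ v).2 := by
  have := mul_pos (hS.pos hv) hS.radius_pos
  simp only [piece, mem_Icc]
  constructor <;> linarith

lemma sub_one_add_delta_le_of_not_lt (hS : IsAdmissible n O h δ) {v : ℝ} (hv : v ∈ O)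
    (hlt : ¬ v < n - 1) : n - 1 + δ ≤ v := by
  have := hS.le_abs_sub_sub_one v hv
  rw [abs_of_nonneg (by linarith)] at this
  linarith

lemma add_delta_le_of_lt (hS : IsAdmissible n O h δ) {v : ℝ} (hv : v ∈ O)
    (hlt : v < n - 1) : v + δ ≤ n - 1 := by
  have := hS.le_abs_sub_sub_one v hv
  rw [abs_of_neg (by linarith)] at this
  linarith

lemma exists_mem_intervals_superset (hS : IsAdmissible n O h δ) {w : ℝ} (hw : w ∈ O) :
    ∃ q ∈ intervals n O δ, Icc (piece n δ w).1 (piece n δ w).2 ⊆ Icc q.1 q.2 := by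
  by_cases hlt : w < n - 1
  · exact ⟨piece n δ w, mem_intervals.mpr (Or.inl ⟨w, hw, hlt, rfl⟩), subset_rfl⟩
  refine ⟨topPiece n δ, mem_intervals.mpr (Or.inr rfl), Icc_subset_Icc ?_ ?_⟩ <;>
    simp only [topPiece]
  · linarith [hS.piece_fst_lt hw, hS.sub_one_add_delta_le_of_not_lt hw hlt]
  · linarith [hS.piece_snd_lt hw, hS.add_delta_le w hw, hS.delta_pos]

lemma exists_Icc_subset_image_mul (hS : IsAdmissible n O h δ) (hn : 2 ≤ n) {v : ℝ} (hv : v ∈ O)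
    (hlt : v < n - 1) : ∃ q ∈ intervals n O δ, Icc (piece n δ v).1 (piece n δ v).2 ⊆
      (fun x => (1 - 1 / (n : ℝ)) * x) '' Icc q.1 q.2 := by
  obtain ⟨q, hq, hsub⟩ := hS.exists_mem_intervals_superset (hS.mul_scale_mem v hv hlt)
  refine ⟨q, hq, Icc_subset_image_of_leftInverse (ψ := (· * scale n)) (fun x => ?_)
    (fun x y hxy => mul_le_mul_of_nonneg_right hxy (scale_pos hn).le) ?_⟩
  · simp only
    rw [← mul_assoc, mul_comm _ x, mul_assoc, one_sub_inv_mul_scale hn, mul_one]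
  · convert hsub using 2 <;> simp only [piece] <;> ring

lemma exists_Icc_subset_image_sub_one (hS : IsAdmissible n O h δ) {v : ℝ} (hv : v ∈ O)
    (hlt : v < n - 1) : ∃ q ∈ intervals n O δ, Icc (piece n δ v).1 (piece n δ v).2 ⊆
      (fun x => x - 1) '' Icc q.1 q.2 := by
  obtain ⟨q, hq, hsub⟩ := hS.exists_mem_intervals_superset (hS.add_one_mem v hv hlt)
  refine ⟨q, hq, Icc_subset_image_of_leftInverse (ψ := (· + 1)) (fun x => add_sub_cancel_right x 1)
    (fun _ _ hxy => (add_le_add_iff_right 1).2 hxy) (Subset.trans (Icc_subset_Icc ?_ ?_) hsub)⟩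
  · have := hS.radius_pos
    simp only [piece]
    nlinarith
  · have := hS.radius_pos
    simp only [piece]
    nlinarith

lemma one_le_natCast (hS : IsAdmissible n O h δ) : (1 : ℝ) ≤ n := by
  have : 0 < n := by exact_mod_cast hS.natCast_pos
  exact_mod_cast this

lemma piece_fst_pos (hS : IsAdmissible n O h δ) {v : ℝ} (hv : v ∈ O) : 0 < (piece n δ v).1 := by
  have : radius n δ < 1 := by
    rw [radius, div_lt_one (by linarith [hS.natCast_pos])]
    linarith [hS.one_le_natCast, hS.delta_lt_one]
  exact mul_pos (hS.pos hv) (by linarith)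

lemma intervals_bounds (hS : IsAdmissible n O h δ) :
    ∀ p ∈ intervals n O δ, p.1 < p.2 ∧ 0 < p.1 ∧ p.2 < n := by
  intro p hp
  rcases mem_intervals.mp hp with ⟨v, hv, -, rfl⟩ | rfl
  · have := mul_pos (hS.pos hv) hS.radius_pos
    refine ⟨by simp only [piece]; linarith, hS.piece_fst_pos hv, ?_⟩
    linarith [hS.piece_snd_lt hv, hS.add_delta_le v hv, hS.delta_pos]
  · have := hS.delta_lt_one
    have := hS.delta_pos
    have := hS.one_le_natCast
    simp only [topPiece]
    exact ⟨by linarith, by linarith, by linarith⟩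

lemma intervals_chain (hS : IsAdmissible n O h δ) :
    (intervals n O δ).IsChain (fun p q => p.2 < q.1) := by
  apply List.Pairwise.isChain
  rw [intervals, List.pairwise_append, List.pairwise_map]
  refine ⟨(Finset.sortedLT_sort _).pairwise.imp_of_mem fun hv hw hvw => ?_,
    List.pairwise_singleton _ _, ?_⟩
  · rw [Finset.mem_sort, Finset.mem_filter] at hv hw
    have := hS.le_abs_sub _ hw.1 _ hv.1 hvw.ne'
    rw [abs_of_pos (by linarith)] at this
    linarith [hS.piece_snd_lt hv.1, hS.piece_fst_lt hw.1]
  · simp only [List.mem_map, Finset.mem_sort, Finset.mem_filter, List.mem_singleton]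
    rintro _ ⟨v, ⟨hv, hlt⟩, rfl⟩ _ rfl
    simp only [topPiece]
    linarith [hS.piece_snd_lt hv, hS.add_delta_le_of_lt hv hlt, hS.delta_pos]

lemma intervals_head? (hS : IsAdmissible n O h δ) (hn : 2 ≤ n) :
    (intervals n O δ).head? = some (piece n δ h) := by
  have hn' : (2 : ℝ) ≤ n := by exact_mod_cast hn
  have hh : h < n - 1 := by linarith [hS.seed_add_delta_le, hS.delta_pos]
  have hsorted : ((O.filter (· < (n : ℝ) - 1)).sort).head? = some h := by
    refine List.head?_eq_of_pairwise_lt (Finset.sortedLT_sort _).pairwise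
      (by simp [hS.seed_mem, hh]) fun v hv => ?_
    rw [Finset.mem_sort, Finset.mem_filter] at hv
    by_cases hvh : v = h
    · exact hvh.ge
    · linarith [hS.one_lt v hv.1 hvh, hS.seed_add_delta_le, hS.delta_pos]
  simp [intervals, List.head?_append, hsorted]

lemma Icc_topPiece_subset (hS : IsAdmissible n O h δ) :
    Icc (topPiece n δ).1 (topPiece n δ).2 ⊆ Ioo ((n : ℝ) - 1) n := by
  have := hS.delta_pos
  exact Icc_subset_Ioo (by simp only [topPiece]; linarith) (by simp only [topPiece]; linarith)

lemma Icc_piece_seed_subset (hS : IsAdmissible n O h δ) :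
    Icc (piece n δ h).1 (piece n δ h).2 ⊆ Ioo 0 1 :=
  Icc_subset_Ioo (hS.piece_fst_pos hS.seed_mem)
    (by linarith [hS.piece_snd_lt hS.seed_mem, hS.seed_add_delta_le, hS.delta_pos])

lemma eq_topPiece_of_subset (hS : IsAdmissible n O h δ) {p : ℝ × ℝ}
    (hp : p ∈ intervals n O δ) (hsub : Icc p.1 p.2 ⊆ Ioo ((n : ℝ) - 1) n) : p = topPiece n δ := by
  rcases mem_intervals.mp hp with ⟨v, hv, hlt, rfl⟩ | rfl
  · exact absurd (hsub (hS.mem_Icc_piece hv)).1 hlt.not_gt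
  · rfl

lemma eq_piece_seed_of_subset (hS : IsAdmissible n O h δ) (hn : 2 ≤ n) {p : ℝ × ℝ}
    (hp : p ∈ intervals n O δ) (hsub : Icc p.1 p.2 ⊆ Ioo 0 1) : p = piece n δ h := by
  rcases mem_intervals.mp hp with ⟨v, hv, -, rfl⟩ | rfl
  · by_contra hvh
    have := (hsub (hS.mem_Icc_piece hv)).2
    exact this.not_gt (hS.one_lt v hv fun hvh' => hvh (congrArg _ hvh'))
  · have hn' : (2 : ℝ) ≤ n := by exact_mod_cast hn
    have := hS.delta_pos
    have := (hsub (left_mem_Icc.mpr (hS.intervals_bounds _ hp).1.le)).2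
    simp only [topPiece] at this
    linarith

end IsAdmissible

end Template

open Template in
theorem exists_template (n : ℕ) (hn : 3 ≤ n) :
    ∃ T : List (ℝ × ℝ), T ≠ [] ∧
      (∀ p ∈ T, p.1 < p.2 ∧ 0 < p.1 ∧ p.2 < (n : ℝ)) ∧
      T.Chain' (fun p q => p.2 < q.1) ∧
      (∃ plast ∈ T.getLast?, Set.Icc plast.1 plast.2 ⊆ Set.Ioo ((n : ℝ) - 1) (n : ℝ)) ∧
      (∀ p ∈ T, Set.Icc p.1 p.2 ⊆ Set.Ioo ((n : ℝ) - 1) (n : ℝ) → T.getLast? = some p) ∧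
      (∃ p0 ∈ T.head?, Set.Icc p0.1 p0.2 ⊆ Set.Ioo (0 : ℝ) 1) ∧
      (∀ p ∈ T, Set.Icc p.1 p.2 ⊆ Set.Ioo (0 : ℝ) 1 → T.head? = some p) ∧
      (∀ p ∈ T, T.getLast? ≠ some p →
        ∃ q ∈ T, Set.Icc p.1 p.2 ⊆ (fun x => (1 - 1 / (n : ℝ)) * x) '' Set.Icc q.1 q.2) ∧
      (∀ p ∈ T, T.getLast? ≠ some p →
        ∃ q ∈ T, Set.Icc p.1 p.2 ⊆ (fun x => x - 1) '' Set.Icc q.1 q.2) := by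
  have hn : 2 ≤ n := by omega
  obtain ⟨O, h, δ, hS⟩ := exists_isAdmissible hn
  refine ⟨intervals n O δ, by simp [intervals], hS.intervals_bounds, hS.intervals_chain,
    ⟨_, intervals_getLast? O δ, hS.Icc_topPiece_subset⟩, fun p hp hsub => ?_,
    ⟨_, hS.intervals_head? hn, hS.Icc_piece_seed_subset⟩, fun p hp hsub => ?_,
    fun p hp hlast => ?_, fun p hp hlast => ?_⟩
  · rw [intervals_getLast?, hS.eq_topPiece_of_subset hp hsub]
  · rw [hS.intervals_head? hn, hS.eq_piece_seed_of_subset hn hp hsub]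
  · obtain ⟨v, hv, hlt, rfl⟩ := exists_piece_eq_of_getLast?_ne hp hlast
    exact hS.exists_Icc_subset_image_mul hn hv hlt
  · obtain ⟨v, hv, hlt, rfl⟩ := exists_piece_eq_of_getLast?_ne hp hlast
    exact hS.exists_Icc_subset_image_sub_one hv hlt
end
end

section
/- Let K and L be regions (finite disjoint unions of closed intervals with nonempty interior) contained in the open interval (0,1), and let ε > 0. Then there exists a finite sequence of regions M₀ = K, M₁, …, M_{i₀} = L in (0,1) such that consecutive regions M_i and M_{i+1} are ε-equivalent: there exist orientation-preserving PL-homeomorphisms φ, ψ of [0,1] with μ(φ) < ε, μ(ψ) < ε, φ(M_i) ⊇ M_{i+1}, and ψ(M_{i+1}) ⊇ M_i. -/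
/-- `μ(f) < ε` for a piecewise linear map on `[0,1]`: away from a finite set of
corners the slope is within `ε` of `1`. -/
def MuLt (f : ℝ → ℝ) (ε : ℝ) : Prop :=
  ∃ s : Finset ℝ, ∀ x ∈ Set.Icc (0:ℝ) 1, x ∉ (s : Set ℝ) →
    ∃ d : ℝ, HasDerivAt f d x ∧ |d - 1| < ε

/-- An orientation-preserving PL homeomorphism of `[0,1]` with `μ < ε`. -/
def IsPLHomeoMuLt (φ : ℝ → ℝ) (ε : ℝ) : Prop :=
  Set.BijOn φ (Set.Icc (0:ℝ) 1) (Set.Icc (0:ℝ) 1) ∧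
  StrictMonoOn φ (Set.Icc (0:ℝ) 1) ∧ MuLt φ ε

/-- Two regions `K`, `L` contained in `(0,1)` are `ε`-equivalent. -/
def EpsEquiv (ε : ℝ) (K L : Set ℝ) : Prop :=
  ∃ φ ψ : ℝ → ℝ, IsPLHomeoMuLt φ ε ∧ IsPLHomeoMuLt ψ ε ∧
    φ '' K ⊆ L ∧ ψ '' L ⊆ K

/-!
A region in `(0,1)` with `r` components is every other step of a partition
`0 = f 0 < f 1 < ⋯ < f (2r+1) = 1`. The PL homeomorphism `x ↦ x + (t - f j) · hat(x)`, with `hat`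
the hat function on `[f (j-1), f (j+1)]` peaking at `f j`, moves the single node `f j` to `t` and
has `μ ≤ |t - f j| / (shortest step)`. Moving the nodes one at a time, in small steps along the
segment between two partitions, links any two regions with the same number of components. A
component that is short and close to its left neighbour is swallowed by one such homeomorphism,
while the other direction is the inclusion, so the number of components can be lowered to one.
-/

open Set

lemma isPLHomeoMuLt_of_strictMono {φ : ℝ → ℝ} {ε : ℝ} (hc : Continuous φ) (hφ : StrictMono φ)
    (h0 : φ 0 = 0) (h1 : φ 1 = 1) (hμ : MuLt φ ε) : IsPLHomeoMuLt φ ε := by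
  refine ⟨⟨fun x hx => ?_, hφ.injective.injOn, fun y hy => ?_⟩, hφ.strictMonoOn _, hμ⟩
  · exact ⟨h0 ▸ hφ.monotone hx.1, h1 ▸ hφ.monotone hx.2⟩
  · exact intermediate_value_Icc zero_le_one hc.continuousOn (by rwa [h0, h1])

lemma isPLHomeoMuLt_id {ε : ℝ} (hε : 0 < ε) : IsPLHomeoMuLt id ε :=
  isPLHomeoMuLt_of_strictMono continuous_id strictMono_id rfl rfl
    ⟨∅, fun x _ _ => ⟨1, hasDerivAt_id x, by simpa using hε⟩⟩

noncomputable def tent (u w v x : ℝ) : ℝ :=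
  max 0 (min ((x - u) / (w - u)) ((v - x) / (v - w)))

noncomputable def bump (u w v t x : ℝ) : ℝ :=
  x + (t - w) * tent u w v x

section tent

variable {u w v : ℝ}

lemma tent_of_le {x : ℝ} (huw : u < w) (hx : x ≤ u) : tent u w v x = 0 :=
  max_eq_left <| (min_le_left _ _).trans <|
    div_nonpos_of_nonpos_of_nonneg (by linarith) (by linarith)

lemma tent_of_ge {x : ℝ} (hwv : w < v) (hx : v ≤ x) : tent u w v x = 0 :=
  max_eq_left <| (min_le_right _ _).trans <|
    div_nonpos_of_nonpos_of_nonneg (by linarith) (by linarith)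

lemma tent_self (huw : u < w) (hwv : w < v) : tent u w v w = 1 := by
  simp [tent, div_self (sub_pos.2 huw).ne', div_self (sub_pos.2 hwv).ne']

lemma abs_tent_sub_le {δ x y : ℝ} (hδ : 0 < δ) (huw : δ ≤ w - u) (hwv : δ ≤ v - w) :
    |tent u w v y - tent u w v x| ≤ |y - x| / δ := by
  have h1 : |(y - u) / (w - u) - (x - u) / (w - u)| ≤ |y - x| / δ := by
    rw [← sub_div, sub_sub_sub_cancel_right, abs_div, abs_of_pos (show 0 < w - u by linarith)]
    exact div_le_div_of_nonneg_left (abs_nonneg _) hδ huw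
  have h2 : |(v - y) / (v - w) - (v - x) / (v - w)| ≤ |y - x| / δ := by
    rw [← sub_div, sub_sub_sub_cancel_left, abs_div, abs_of_pos (show 0 < v - w by linarith),
      abs_sub_comm]
    exact div_le_div_of_nonneg_left (abs_nonneg _) hδ hwv
  calc |tent u w v y - tent u w v x|
      ≤ max |0 - 0| |min ((y - u) / (w - u)) ((v - y) / (v - w)) -
          min ((x - u) / (w - u)) ((v - x) / (v - w))| := abs_max_sub_max_le_max _ _ _ _
    _ ≤ |y - x| / δ := by
      rw [sub_self, abs_zero, max_le_iff]
      exact ⟨by positivity, (abs_min_sub_min_le_max _ _ _ _).trans (max_le h1 h2)⟩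

lemma exists_hasDerivAt_tent {δ x : ℝ} (hδ : 0 < δ) (huw : δ ≤ w - u) (hwv : δ ≤ v - w)
    (hxu : x ≠ u) (hxw : x ≠ w) (hxv : x ≠ v) :
    ∃ a, HasDerivAt (tent u w v) a x ∧ |a| ≤ 1 / δ := by
  have hwu : 0 < w - u := by linarith
  have hvw : 0 < v - w := by linarith
  rcases hxu.lt_or_gt with hx | hx
  · refine ⟨0, (hasDerivAt_const x 0).congr_of_eventuallyEq ?_, by simp [hδ.le]⟩
    filter_upwards [Iio_mem_nhds hx] with y hy using tent_of_le (by linarith) hy.le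
  rcases hxv.lt_or_gt with hx' | hx'
  swap
  · refine ⟨0, (hasDerivAt_const x 0).congr_of_eventuallyEq ?_, by simp [hδ.le]⟩
    filter_upwards [Ioi_mem_nhds hx'] with y hy using tent_of_ge (by linarith) hy.le
  rcases hxw.lt_or_gt with hxw | hxw
  · refine ⟨1 / (w - u), ?_, ?_⟩
    · have hd : HasDerivAt (fun y => (y - u) / (w - u)) (1 / (w - u)) x :=
        ((hasDerivAt_id x).sub_const u).div_const _
      refine hd.congr_of_eventuallyEq ?_
      filter_upwards [Ioo_mem_nhds hx hxw] with y hy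
      have h1 : (y - u) / (w - u) ≤ 1 := (div_le_one hwu).2 (by linarith [hy.2])
      have h2 : 1 ≤ (v - y) / (v - w) := (one_le_div hvw).2 (by linarith [hy.2])
      rw [tent, min_eq_left (h1.trans h2),
        max_eq_right (div_nonneg (by linarith [hy.1]) hwu.le)]
    · rw [abs_of_pos (by positivity)]
      exact one_div_le_one_div_of_le hδ huw
  · refine ⟨-1 / (v - w), ?_, ?_⟩
    · have hd : HasDerivAt (fun y => (v - y) / (v - w)) (-1 / (v - w)) x :=
        ((hasDerivAt_id x).const_sub v).div_const _
      refine hd.congr_of_eventuallyEq ?_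
      filter_upwards [Ioo_mem_nhds hxw hx'] with y hy
      have h1 : (v - y) / (v - w) ≤ 1 := (div_le_one hvw).2 (by linarith [hy.1])
      have h2 : 1 ≤ (y - u) / (w - u) := (one_le_div hwu).2 (by linarith [hy.1])
      rw [tent, min_eq_right (h1.trans h2),
        max_eq_right (div_nonneg (by linarith [hy.2]) hvw.le)]
    · rw [neg_div, abs_neg, abs_of_pos (by positivity)]
      exact one_div_le_one_div_of_le hδ hwv

end tent

section bump

variable {u w v t : ℝ}

lemma bump_of_le {x : ℝ} (huw : u < w) (hx : x ≤ u) : bump u w v t x = x := by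
  rw [bump, tent_of_le huw hx, mul_zero, add_zero]

lemma bump_of_ge {x : ℝ} (hwv : w < v) (hx : v ≤ x) : bump u w v t x = x := by
  rw [bump, tent_of_ge hwv hx, mul_zero, add_zero]

lemma bump_self (huw : u < w) (hwv : w < v) : bump u w v t w = t := by
  rw [bump, tent_self huw hwv]
  ring

variable {δ : ℝ} (huw : δ ≤ w - u) (hwv : δ ≤ v - w) (ht : |t - w| < δ)
include huw hwv ht

lemma bump_strictMono : StrictMono (bump u w v t) := by
  have hδ := (abs_nonneg _).trans_lt ht
  intro x y hxy
  have hlip := abs_tent_sub_le hδ huw hwv (x := x) (y := y)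
  rw [abs_of_pos (sub_pos.2 hxy)] at hlip
  -- the hat function is `1/δ`-Lipschitz and `|t - w| < δ`
  have : |(t - w) * (tent u w v y - tent u w v x)| < y - x := by
    rw [abs_mul]
    calc |t - w| * |tent u w v y - tent u w v x| ≤ |t - w| * ((y - x) / δ) :=
          mul_le_mul_of_nonneg_left hlip (abs_nonneg _)
      _ < δ * ((y - x) / δ) := mul_lt_mul_of_pos_right ht (div_pos (sub_pos.2 hxy) hδ)
      _ = y - x := by field_simp
  simp only [bump]
  linarith [neg_abs_le ((t - w) * (tent u w v y - tent u w v x))]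

lemma bump_isPLHomeoMuLt {ε : ℝ} (hu : 0 ≤ u) (hv : v ≤ 1) (htε : |t - w| < ε * δ) :
    IsPLHomeoMuLt (bump u w v t) ε := by
  have hδ := (abs_nonneg _).trans_lt ht
  refine isPLHomeoMuLt_of_strictMono (by unfold bump tent; fun_prop)
    (bump_strictMono huw hwv ht) (bump_of_le (by linarith) hu) (bump_of_ge (by linarith) hv)
    ⟨{u, w, v}, fun x _ hx => ?_⟩
  simp only [Finset.coe_insert, Finset.coe_singleton, mem_insert_iff, mem_singleton_iff,
    not_or] at hx
  obtain ⟨a, ha, ha1⟩ := exists_hasDerivAt_tent hδ huw hwv hx.1 hx.2.1 hx.2.2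
  refine ⟨1 + (t - w) * a, (hasDerivAt_id x).add (ha.const_mul _), ?_⟩
  calc |1 + (t - w) * a - 1| = |t - w| * |a| := by rw [add_sub_cancel_left, abs_mul]
    _ ≤ |t - w| * (1 / δ) := mul_le_mul_of_nonneg_left ha1 (abs_nonneg _)
    _ < ε := by rw [mul_one_div, div_lt_iff₀ hδ]; exact htε

end bump

def IsPartition (n : ℕ) (γ : ℝ) (f : ℕ → ℝ) : Prop :=
  f 0 = 0 ∧ f n = 1 ∧ ∀ i < n, γ ≤ f (i + 1) - f i

def regionOf (r : ℕ) (f : ℕ → ℝ) : Set ℝ :=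
  ⋃ j ∈ Finset.range r, Icc (f (2 * j + 1)) (f (2 * j + 2))

def IsInnerRegion (K : Set ℝ) : Prop :=
  IsRegion K ∧ K ⊆ Ioo 0 1

namespace IsPartition

variable {n : ℕ} {γ : ℝ} {f : ℕ → ℝ}

lemma natCast_sub_mul_le (hf : IsPartition n γ f) {i j : ℕ} (hij : i ≤ j) (hj : j ≤ n) :
    ((j - i : ℕ) : ℝ) * γ ≤ f j - f i := by
  induction j, hij using Nat.le_induction with
  | base => simp
  | succ j hij ih =>
    have hstep := hf.2.2 j (by omega)
    have := ih (by omega)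
    rw [Nat.succ_sub hij]
    push_cast
    linarith

lemma apply_le_apply (hf : IsPartition n γ f) (hγ : 0 ≤ γ) {i j : ℕ} (hij : i ≤ j)
    (hj : j ≤ n) : f i ≤ f j := by
  linarith [hf.natCast_sub_mul_le hij hj, mul_nonneg (Nat.cast_nonneg (j - i) : (0 : ℝ) ≤ _) hγ]

lemma apply_lt_apply (hf : IsPartition n γ f) (hγ : 0 < γ) {i j : ℕ} (hij : i < j)
    (hj : j ≤ n) : f i < f j := by
  have h1 : (1 : ℝ) ≤ ((j - i : ℕ) : ℝ) := by exact_mod_cast (by omega : 1 ≤ j - i)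
  linarith [hf.natCast_sub_mul_le hij.le hj, mul_le_mul_of_nonneg_right h1 hγ.le]

lemma mem_Icc (hf : IsPartition n γ f) (hγ : 0 ≤ γ) {i : ℕ} (hi : i ≤ n) : f i ∈ Icc 0 1 :=
  ⟨hf.1 ▸ hf.apply_le_apply hγ (Nat.zero_le i) hi, hf.2.1 ▸ hf.apply_le_apply hγ hi le_rfl⟩

lemma mem_Ioo (hf : IsPartition n γ f) (hγ : 0 < γ) {i : ℕ} (hi0 : 0 < i) (hi : i < n) :
    f i ∈ Ioo 0 1 :=
  ⟨hf.1 ▸ hf.apply_lt_apply hγ hi0 hi.le, hf.2.1 ▸ hf.apply_lt_apply hγ hi le_rfl⟩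

lemma of_le (hf : IsPartition n γ f) {γ' : ℝ} (h : γ' ≤ γ) : IsPartition n γ' f :=
  ⟨hf.1, hf.2.1, fun i hi => h.trans (hf.2.2 i hi)⟩

lemma add_mul_sub {g : ℕ → ℝ} (hf : IsPartition n γ f) (hg : IsPartition n γ g) {s : ℝ}
    (hs0 : 0 ≤ s) (hs1 : s ≤ 1) : IsPartition n γ (fun i => f i + s * (g i - f i)) := by
  refine ⟨by simp [hf.1, hg.1], by simp [hf.2.1, hg.2.1], fun i hi => ?_⟩
  have hfi := hf.2.2 i hi
  have hgi := hg.2.2 i hi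
  nlinarith

end IsPartition

lemma regionOf_congr {r : ℕ} {f g : ℕ → ℝ} (h : ∀ i ≤ 2 * r, f i = g i) :
    regionOf r f = regionOf r g :=
  iUnion₂_congr fun j hj => by
    rw [h _ (by simp at hj; omega), h _ (by simp at hj; omega)]

lemma regionOf_succ (r : ℕ) (f : ℕ → ℝ) :
    regionOf (r + 1) f = regionOf r f ∪ Icc (f (2 * r + 1)) (f (2 * r + 2)) := by
  rw [regionOf, Finset.range_add_one, Finset.set_biUnion_insert, union_comm, regionOf]

lemma image_regionOf_subset {r : ℕ} {f g : ℕ → ℝ} {φ : ℝ → ℝ} (hφ : Monotone φ)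
    (h : ∀ i ≤ 2 * r, φ (f i) = g i) : φ '' regionOf r f ⊆ regionOf r g := by
  rw [regionOf, image_iUnion₂]
  refine iUnion₂_mono fun j hj => ?_
  rw [← h _ (by simp at hj; omega), ← h _ (by simp at hj; omega)]
  exact hφ.image_Icc_subset

lemma isInnerRegion_regionOf {r : ℕ} {γ : ℝ} {f : ℕ → ℝ} (hr : 0 < r) (hγ : 0 < γ)
    (hf : IsPartition (2 * r + 1) γ f) : IsInnerRegion (regionOf r f) := by
  refine ⟨⟨(Finset.range r).image fun j => (f (2 * j + 1), f (2 * j + 2)),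
    (Finset.nonempty_range_iff.2 hr.ne').image _, ?_, ?_, ?_⟩, ?_⟩
  · simp only [Finset.mem_image, Finset.mem_range]
    rintro _ ⟨j, hj, rfl⟩
    exact hf.apply_lt_apply hγ (by omega) (by omega)
  · simp only [Finset.mem_image, Finset.mem_range]
    rintro _ ⟨j, hj, rfl⟩ _ ⟨k, hk, rfl⟩ hne
    have hjk : j ≠ k := by rintro rfl; exact hne rfl
    rw [disjoint_left]
    rintro x ⟨hx1, hx2⟩ ⟨hx3, hx4⟩
    rcases hjk.lt_or_gt with h | h
    · linarith [hf.apply_lt_apply hγ (by omega : 2 * j + 2 < 2 * k + 1) (by omega)]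
    · linarith [hf.apply_lt_apply hγ (by omega : 2 * k + 2 < 2 * j + 1) (by omega)]
  · rw [Finset.set_biUnion_finset_image, regionOf]
  · simp only [regionOf, subset_def, mem_iUnion, Finset.mem_range]
    rintro x ⟨j, hj, hx1, hx2⟩
    exact ⟨(hf.mem_Ioo hγ (by omega) (by omega)).1.trans_le hx1,
      hx2.trans_lt (hf.mem_Ioo hγ (i := 2 * j + 2) (by omega) (by omega)).2⟩

open Relation Function

def EpsLinked (ε : ℝ) (A B : Set ℝ) : Prop :=
  IsInnerRegion A ∧ IsInnerRegion B ∧ EpsEquiv ε A B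

lemma EpsEquiv.symm {ε : ℝ} {A B : Set ℝ} (h : EpsEquiv ε A B) : EpsEquiv ε B A :=
  let ⟨φ, ψ, hφ, hψ, hφAB, hψBA⟩ := h
  ⟨ψ, φ, hψ, hφ, hψBA, hφAB⟩

instance (ε : ℝ) : Std.Symm (EpsLinked ε) :=
  ⟨fun _ _ ⟨hA, hB, h⟩ => ⟨hB, hA, h.symm⟩⟩

section moving

variable {r : ℕ} {ε : ℝ}

lemma exists_isPLHomeoMuLt_image_regionOf_subset_update {j : ℕ} {δ t : ℝ} {f : ℕ → ℝ}
    (hf : IsPartition (2 * r + 1) δ f) (hj0 : 0 < j) (hj : j < 2 * r + 1)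
    (ht : |t - f j| < δ) (htε : |t - f j| < ε * δ) :
    ∃ φ, IsPLHomeoMuLt φ ε ∧ φ '' regionOf r f ⊆ regionOf r (update f j t) := by
  have hδ : 0 < δ := (abs_nonneg _).trans_lt ht
  have hlo : δ ≤ f j - f (j - 1) := by
    simpa [Nat.sub_add_cancel hj0] using hf.2.2 (j - 1) (by omega)
  have hhi : δ ≤ f (j + 1) - f j := hf.2.2 j hj
  refine ⟨bump (f (j - 1)) (f j) (f (j + 1)) t,
    bump_isPLHomeoMuLt hlo hhi ht (hf.mem_Icc hδ.le (by omega)).1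
      (hf.mem_Icc hδ.le (by omega)).2 htε,
    image_regionOf_subset (bump_strictMono hlo hhi ht).monotone fun i hi => ?_⟩
  rcases lt_trichotomy i j with h | rfl | h
  · rw [update_of_ne h.ne, bump_of_le (by linarith) (hf.apply_le_apply hδ.le (Nat.le_sub_one_of_lt h) (by omega))]
  · rw [update_self, bump_self (by linarith) (by linarith)]
  · rw [update_of_ne h.ne', bump_of_ge (by linarith) (hf.apply_le_apply hδ.le h (by omega))]

lemma epsEquiv_regionOf_update {j : ℕ} {δ t : ℝ} {f : ℕ → ℝ}
    (hf : IsPartition (2 * r + 1) δ f) (hft : IsPartition (2 * r + 1) δ (update f j t))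
    (hj0 : 0 < j) (hj : j < 2 * r + 1) (ht : |t - f j| < δ) (htε : |t - f j| < ε * δ) :
    EpsEquiv ε (regionOf r f) (regionOf r (update f j t)) := by
  obtain ⟨φ, hφ, hφf⟩ := exists_isPLHomeoMuLt_image_regionOf_subset_update hf hj0 hj ht htε
  rw [abs_sub_comm, ← update_self j t f] at ht htε
  obtain ⟨ψ, hψ, hψf⟩ := exists_isPLHomeoMuLt_image_regionOf_subset_update hft hj0 hj ht htε
  rw [update_idem, update_eq_self] at hψf
  exact ⟨φ, ψ, hφ, hψ, hφf, hψf⟩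

lemma reflTransGen_regionOf_of_abs_sub_le {γ β : ℝ} {f g : ℕ → ℝ} (hr : 0 < r)
    (hf : IsPartition (2 * r + 1) γ f) (hg : IsPartition (2 * r + 1) γ g)
    (hβγ : 2 * β < γ) (hβε : 2 * β < ε * γ) (hfg : ∀ i ≤ 2 * r + 1, |g i - f i| ≤ β) :
    ReflTransGen (EpsLinked ε) (regionOf r f) (regionOf r g) := by
  have hβ : 0 ≤ β := (abs_nonneg _).trans (hfg 0 (by omega))
  have hγ : 0 < γ / 2 := by linarith
  -- move the nodes from `f` to `g` one at a time, from left to right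
  set mix : ℕ → ℕ → ℝ := fun k i => if i ≤ k then g i else f i
  have hmix : ∀ k, IsPartition (2 * r + 1) (γ / 2) (mix k) := by
    refine fun k => ⟨by simp [mix, hg.1], by simp only [mix]; split_ifs <;> simp [hf.2.1, hg.2.1],
      fun i hi => ?_⟩
    have hfi := hf.2.2 i hi
    have hgi := hg.2.2 i hi
    have hdi := abs_le.1 (hfg i hi.le)
    simp only [mix]
    split_ifs <;> linarith
  have hstep : ∀ k, mix (k + 1) = update (mix k) (k + 1) (g (k + 1)) := fun k => funext fun i => by
    rcases lt_trichotomy i (k + 1) with h | rfl | h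
    · simp only [mix, update_of_ne h.ne, if_pos (show i ≤ k by omega), if_pos h.le]
    · simp only [mix, update_self, if_pos le_rfl]
    · simp only [mix, update_of_ne h.ne', if_neg (show ¬ i ≤ k by omega),
        if_neg (show ¬ i ≤ k + 1 by omega)]
  have hchain : ∀ k ≤ 2 * r, ReflTransGen (EpsLinked ε) (regionOf r f) (regionOf r (mix k)) := by
    intro k hk
    induction k with
    | zero =>
      rw [show mix 0 = f from funext fun i => by
        rcases i with _ | i <;> simp [mix, hf.1, hg.1]]
    | succ k ih =>
      have hd : |g (k + 1) - mix k (k + 1)| ≤ β := by simpa [mix] using hfg (k + 1) (by omega)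
      refine (ih (by omega)).tail ⟨isInnerRegion_regionOf hr hγ (hmix k),
        isInnerRegion_regionOf hr hγ (hmix (k + 1)), ?_⟩
      rw [hstep]
      exact epsEquiv_regionOf_update (hmix k) (hstep k ▸ hmix (k + 1)) (by omega) (by omega)
        (by linarith) (by linarith)
  simpa [regionOf_congr (f := mix (2 * r)) (g := g) fun i hi => if_pos hi] using
    hchain (2 * r) le_rfl

lemma reflTransGen_regionOf {γ γ' : ℝ} {f g : ℕ → ℝ} (hr : 0 < r) (hε : 0 < ε) (hγ : 0 < γ)
    (hγ' : 0 < γ') (hf : IsPartition (2 * r + 1) γ f) (hg : IsPartition (2 * r + 1) γ' g) :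
    ReflTransGen (EpsLinked ε) (regionOf r f) (regionOf r g) := by
  set γ₀ := min γ γ'
  have hf₀ := hf.of_le (min_le_left γ γ')
  have hg₀ := hg.of_le (min_le_right γ γ')
  have hγ₀ : 0 < γ₀ := lt_min hγ hγ'
  obtain ⟨N, hN⟩ := exists_nat_gt (2 / (γ₀ * min ε 1))
  have hN0 : (0 : ℝ) < N := lt_trans (by positivity) hN
  have hNγ : 2 / N < γ₀ * min ε 1 := by
    rw [div_lt_iff₀ hN0, mul_comm]; rwa [div_lt_iff₀ (by positivity)] at hN
  have hβγ : 2 * (1 / N) < γ₀ := by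
    rw [mul_one_div]
    linarith [mul_le_mul_of_nonneg_left (min_le_right ε 1) hγ₀.le]
  have hβε : 2 * (1 / N) < ε * γ₀ := by
    rw [mul_one_div]
    linarith [mul_le_mul_of_nonneg_left (min_le_left ε 1) hγ₀.le]
  -- walk along the segment from `f` to `g` in `N` steps
  set path : ℕ → ℕ → ℝ := fun k i => f i + (k / N) * (g i - f i)
  have hpath : ∀ k ≤ N, IsPartition (2 * r + 1) γ₀ (path k) := fun k hk =>
    hf₀.add_mul_sub hg₀ (by positivity) ((div_le_one hN0).2 (by exact_mod_cast hk))
  have hchain : ∀ k ≤ N, ReflTransGen (EpsLinked ε) (regionOf r f) (regionOf r (path k)) := by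
    intro k hk
    induction k with
    | zero => simpa [path] using ReflTransGen.refl
    | succ k ih =>
      refine (ih (by omega)).trans (reflTransGen_regionOf_of_abs_sub_le hr (hpath k (by omega))
        (hpath (k + 1) hk) hβγ hβε fun i hi => ?_)
      have hfi := hf.mem_Icc hγ.le hi
      have hgi := hg.mem_Icc hγ'.le hi
      have : path (k + 1) i - path k i = (g i - f i) / N := by
        simp only [path]; push_cast; ring
      rw [this, abs_div, abs_of_pos hN0]
      exact div_le_div_of_nonneg_right
        (abs_le.2 ⟨by linarith [hfi.2, hgi.1], by linarith [hfi.1, hgi.2]⟩) hN0.le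
  simpa [path, hN0.ne'] using hchain N le_rfl

end moving

section components

variable {r : ℕ} {γ : ℝ} {f : ℕ → ℝ}

def addBlock (f : ℕ → ℝ) (r : ℕ) (a b : ℝ) : ℕ → ℝ := fun i =>
  if i ≤ 2 * r then f i else if i = 2 * r + 1 then a else if i = 2 * r + 2 then b else 1

lemma isPartition_addBlock {γ' a b : ℝ} (hf : IsPartition (2 * r + 1) γ f) (hγ' : γ' ≤ γ)
    (ha : γ' ≤ a - f (2 * r)) (hab : γ' ≤ b - a) (hb : γ' ≤ 1 - b) :
    IsPartition (2 * r + 3) γ' (addBlock f r a b) := by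
  refine ⟨by simp [addBlock, hf.1], by simp [addBlock], fun i hi => ?_⟩
  obtain hi | rfl | rfl | rfl : i < 2 * r ∨ i = 2 * r ∨ i = 2 * r + 1 ∨ i = 2 * r + 2 := by omega
  · simpa [addBlock, hi.le, Nat.succ_le_of_lt hi] using hγ'.trans (hf.2.2 i (by omega))
  · simpa [addBlock] using ha
  · simpa [addBlock] using hab
  · simpa [addBlock] using hb

lemma regionOf_addBlock (f : ℕ → ℝ) (r : ℕ) (a b : ℝ) :
    regionOf (r + 1) (addBlock f r a b) = regionOf r f ∪ Icc a b := by
  rw [regionOf_succ, regionOf_congr (g := f) fun i hi => by simp [addBlock, hi]]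
  simp [addBlock]

/-- Pushing `b` onto the end `f (2r)` of the last component of `regionOf r f` swallows a short
interval `[a, b]` lying just right of it. -/
lemma epsEquiv_regionOf_union_Icc {δ ε a b : ℝ} (hr : 0 < r) (hγ : 0 ≤ γ)
    (hf : IsPartition (2 * r + 1) γ f) (ha : f (2 * r) ≤ a) (hab : a ≤ b) (hε : 0 < ε)
    (hbδ : b - f (2 * r) < δ) (hbε : b - f (2 * r) < ε * δ)
    (hδu : δ ≤ b - f (2 * r - 1)) (hδ1 : δ ≤ 1 - b) :
    EpsEquiv ε (regionOf r f ∪ Icc a b) (regionOf r f) := by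
  obtain ⟨s, rfl⟩ : ∃ s, r = s + 1 := ⟨r - 1, by omega⟩
  rw [show 2 * (s + 1) - 1 = 2 * s + 1 by omega] at hδu
  rw [show 2 * (s + 1) = 2 * s + 2 by omega] at ha hbδ hbε
  set u := f (2 * s + 1)
  set c := f (2 * s + 2)
  have hδ : 0 < δ := by linarith
  have huc : u ≤ c := hf.apply_le_apply hγ (by omega) (by omega)
  have ht : |c - b| < δ := by rwa [abs_sub_comm, abs_of_nonneg (by linarith)]
  have htε : |c - b| < ε * δ := by rwa [abs_sub_comm, abs_of_nonneg (by linarith)]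
  have hφ := bump_strictMono hδu hδ1 ht
  have hφu : bump u b 1 c u = u := bump_of_le (by linarith) le_rfl
  have hφb : bump u b 1 c b = c := bump_self (by linarith) (by linarith)
  refine ⟨bump u b 1 c, id, bump_isPLHomeoMuLt hδu hδ1 ht (hf.mem_Icc hγ (by omega)).1 le_rfl htε,
    isPLHomeoMuLt_id hε, ?_, by simp⟩
  have hIcc : bump u b 1 c '' Icc u b ⊆ regionOf (s + 1) f := by
    rw [regionOf_succ]
    exact (hφ.monotone.image_Icc_subset.trans (by rw [hφu, hφb])).trans subset_union_right
  rw [regionOf_succ, image_union, image_union]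
  refine union_subset (union_subset ?_ ?_) ?_
  · refine (image_regionOf_subset hφ.monotone fun i hi => bump_of_le (by linarith) ?_).trans
      subset_union_left
    exact hf.apply_le_apply hγ (by omega) (by omega)
  · exact ((image_mono (Icc_subset_Icc_right (by linarith))).trans hIcc).trans
      (by rw [regionOf_succ])
  · exact ((image_mono (Icc_subset_Icc_left (by linarith))).trans hIcc).trans
      (by rw [regionOf_succ])

lemma exists_isPartition_addBlock_epsEquiv {ε : ℝ} (hr : 0 < r) (hγ : 0 < γ) (hε : 0 < ε)
    (hf : IsPartition (2 * r + 1) γ f) :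
    ∃ γ' > 0, ∃ a b, IsPartition (2 * r + 3) γ' (addBlock f r a b) ∧
      EpsEquiv ε (regionOf (r + 1) (addBlock f r a b)) (regionOf r f) := by
  have hlast : γ ≤ 1 - f (2 * r) := by simpa [hf.2.1] using hf.2.2 (2 * r) (by omega)
  have hprev : γ ≤ f (2 * r) - f (2 * r - 1) := by
    simpa [show 2 * r - 1 + 1 = 2 * r by omega] using hf.2.2 (2 * r - 1) (by omega)
  set m := min ε 1
  have hm : 0 < γ * m := mul_pos hγ (lt_min hε one_pos)
  have hm1 : γ * m ≤ γ := mul_le_of_le_one_right hγ.le (min_le_right ε 1)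
  have hmε : γ * m ≤ γ * ε := mul_le_mul_of_nonneg_left (min_le_left ε 1) hγ.le
  refine ⟨γ * m / 8, by positivity, f (2 * r) + γ * m / 8, f (2 * r) + 2 * (γ * m / 8),
    isPartition_addBlock hf (by linarith) (by linarith) (by linarith) (by linarith), ?_⟩
  rw [regionOf_addBlock]
  exact epsEquiv_regionOf_union_Icc (δ := γ / 2) hr hγ.le hf (by linarith) (by linarith) hε
    (by linarith) (by linarith) (by linarith) (by linarith)

end components

lemma exists_isPartition_regionOf_eq {K : Set ℝ} (hK : IsRegion K) (hK01 : K ⊆ Ioo 0 1) :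
    ∃ r γ f, 0 < r ∧ 0 < γ ∧ IsPartition (2 * r + 1) γ f ∧ regionOf r f = K := by
  classical
  obtain ⟨S, hne, hlt, hdisj, rfl⟩ := hK
  have hmem : ∀ p ∈ S, 0 < p.1 ∧ p.2 < 1 := fun p hp =>
    ⟨(hK01 (mem_biUnion hp ⟨le_rfl, (hlt p hp).le⟩)).1,
      (hK01 (mem_biUnion hp ⟨(hlt p hp).le, le_rfl⟩)).2⟩
  -- add the components of `S` from left to right
  suffices ∀ T ⊆ S, ∃ γ f, 0 < γ ∧ IsPartition (2 * T.card + 1) γ f ∧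
      regionOf T.card f = ⋃ p ∈ T, Icc p.1 p.2 by
    obtain ⟨γ, f, hγ, hf, hfS⟩ := this S subset_rfl
    exact ⟨S.card, γ, f, hne.card_pos, hγ, hf, hfS⟩
  intro T
  refine Finset.induction_on_max_value Prod.fst T
    (fun _ => ⟨1, fun i => i, one_pos, ⟨by simp, by simp, by simp⟩, by simp [regionOf]⟩)
    fun a T haT hmax ih hTS => ?_
  obtain ⟨γ, f, hγ, hf, hfT⟩ := ih ((Finset.subset_insert a T).trans hTS)
  have haS := hTS (Finset.mem_insert_self a T)
  have hleft : ∀ x ∈ ⋃ p ∈ T, Icc p.1 p.2, x < a.1 := by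
    simp only [mem_iUnion]
    rintro x ⟨q, hq, hxq⟩
    by_contra! h
    have hqa : q ≠ a := fun h => haT (h ▸ hq)
    exact disjoint_left.1 (hdisj q (hTS (Finset.mem_insert_of_mem hq)) a haS hqa)
      ⟨hmax q hq, hxq.2.trans' h⟩ ⟨le_rfl, (hlt a haS).le⟩
  have hfa : f (2 * T.card) < a.1 := by
    rcases hk : T.card with _ | k
    · rw [mul_zero, hf.1]; exact (hmem a haS).1
    · rw [hk] at hf hfT
      refine hleft _ (hfT ▸ ?_)
      rw [regionOf_succ]
      exact Or.inr ⟨hf.apply_le_apply hγ.le (by omega) (by omega), le_rfl⟩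
  refine ⟨min γ (min (a.1 - f (2 * T.card)) (min (a.2 - a.1) (1 - a.2))),
    addBlock f T.card a.1 a.2, ?_, ?_, ?_⟩
  · simp only [lt_min_iff, sub_pos]
    exact ⟨hγ, hfa, hlt a haS, (hmem a haS).2⟩
  · rw [Finset.card_insert_of_notMem haT]
    exact isPartition_addBlock hf (by simp) (by simp) (by simp) (by simp)
  · rw [Finset.card_insert_of_notMem haT, regionOf_addBlock, hfT, Finset.set_biUnion_insert,
      union_comm]

lemma isPartition_natCast_div (n : ℕ) (hn : 0 < n) :
    IsPartition n (1 / n) (fun i => (i : ℝ) / n) :=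
  ⟨by simp, div_self (by positivity), fun i _ => by push_cast; ring_nf; rfl⟩

lemma reflTransGen_regionOf_one {ε : ℝ} (hε : 0 < ε) {r : ℕ} (hr : 0 < r) :
    ∀ {γ : ℝ} {f : ℕ → ℝ}, 0 < γ → IsPartition (2 * r + 1) γ f →
      ReflTransGen (EpsLinked ε) (regionOf r f) (regionOf 1 fun i => (i : ℝ) / 3) := by
  induction r, (hr : 1 ≤ r) using Nat.le_induction with
  | base =>
    exact fun hγ hf => reflTransGen_regionOf one_pos hε hγ (by norm_num) hf
      (isPartition_natCast_div 3 (by norm_num))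
  | succ r hr ih =>
    intro γ f hγ hf
    -- compare `f` with a grid partition enlarged by a small extra component
    have hgrid := isPartition_natCast_div (2 * r + 1) (by omega)
    obtain ⟨γ', hγ', a, b, hg, hgrid_g⟩ :=
      exists_isPartition_addBlock_epsEquiv hr (by positivity) hε hgrid
    exact ((reflTransGen_regionOf (by omega) hε hγ hγ' hf hg).tail
      ⟨isInnerRegion_regionOf (by omega) hγ' hg, isInnerRegion_regionOf hr (by positivity) hgrid,
        hgrid_g⟩).trans (ih (by positivity) hgrid)

lemma Relation.ReflTransGen.exists_seq {α : Type*} {R : α → α → Prop} {a b : α}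
    (h : ReflTransGen R a b) :
    ∃ n, ∃ M : ℕ → α, M 0 = a ∧ M n = b ∧ ∀ i < n, R (M i) (M (i + 1)) := by
  induction h with
  | refl => exact ⟨0, fun _ => a, rfl, rfl, fun i hi => absurd hi (Nat.not_lt_zero i)⟩
  | @tail c d _ hcd ih =>
    obtain ⟨n, M, h0, hn, hM⟩ := ih
    refine ⟨n + 1, fun i => if i ≤ n then M i else d, by simp [h0], by simp, fun i hi => ?_⟩
    rcases (Nat.lt_succ_iff.1 hi).lt_or_eq with hi | rfl
    · simpa [hi.le, Nat.succ_le_of_lt hi] using hM i hi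
    · simpa [hn] using hcd

theorem exists_eps_equivalent_sequence (K L : Set ℝ)
    (hK : IsRegion K) (hL : IsRegion L)
    (hKsub : K ⊆ Set.Ioo (0:ℝ) 1) (hLsub : L ⊆ Set.Ioo (0:ℝ) 1)
    (ε : ℝ) (hε : 0 < ε) :
    ∃ i₀ : ℕ, ∃ M : ℕ → Set ℝ, M 0 = K ∧ M i₀ = L ∧
      (∀ i ≤ i₀, IsRegion (M i) ∧ M i ⊆ Set.Ioo (0:ℝ) 1) ∧
      (∀ i < i₀, EpsEquiv ε (M i) (M (i + 1))) := by
  obtain ⟨r, γ, f, hr, hγ, hf, rfl⟩ := exists_isPartition_regionOf_eq hK hKsub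
  obtain ⟨s, δ, g, hs, hδ, hg, rfl⟩ := exists_isPartition_regionOf_eq hL hLsub
  obtain ⟨n, M, h0, hn, hM⟩ := ((reflTransGen_regionOf_one hε hr hγ hf).trans
    (symm (reflTransGen_regionOf_one hε hs hδ hg))).exists_seq
  refine ⟨n, M, h0, hn, fun i hi => ?_, fun i hi => (hM i hi).2.2⟩
  rcases hi.lt_or_eq with hi | rfl
  · exact (hM i hi).1
  · exact hn ▸ ⟨hL, hLsub⟩
end

section
/- Let K be a region in (0,1) consisting of a single closed interval and L a region consisting of a single closed interval with K ⊆ L, and let ε > 0. Then there exists an ε-equivalent sequence M₀ = K, …, M_{i₀} = L between K and L with the additional monotonicity property M_i ⊆ M_{i+1} for all i = 0, …, i₀ − 1. -/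
/-!
The intervals `[a - iα, b + iβ]`, `0 ≤ i ≤ n`, with `nα = a - c` and `nβ = d - b`, grow from
`[a, b]` to `[c, d]`. Each is ε-equivalent to the next: one way by the identity, the other way by
the piecewise linear homeomorphism of `[0, 1]` fixing `0` and `1` that sends the endpoints of the
larger interval to those of the smaller one. Its three slopes differ from `1` by at most
`(α + β) / m`, where `m` bounds both gaps to `0`, `1` and the interval length from below, so they
are within `ε` of `1` once `n` is large.
-/

open Set

theorem strictMonoOn_Icc_of_hasDerivAt_pos {f : ℝ → ℝ} (s : Finset ℝ) {a b : ℝ}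
    (hf : ContinuousOn f (Icc a b))
    (hd : ∀ x ∈ Ioo a b, x ∉ s → ∃ d, HasDerivAt f d x ∧ 0 < d) :
    StrictMonoOn f (Icc a b) := by
  induction s using Finset.induction_on generalizing a b with
  | empty =>
    refine strictMonoOn_of_deriv_pos (convex_Icc a b) hf fun x hx => ?_
    rw [interior_Icc] at hx
    obtain ⟨d, hfd, hd⟩ := hd x hx (Finset.notMem_empty x)
    rwa [hfd.deriv]
  | insert c s _ ih =>
    have hd' : ∀ x ∈ Ioo a b, x ≠ c → x ∉ s → ∃ d, HasDerivAt f d x ∧ 0 < d :=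
      fun x hx hxc hxs => hd x hx (by simp [hxc, hxs])
    by_cases hc : c ∈ Ioo a b
    · rw [← Icc_union_Icc_eq_Icc hc.1.le hc.2.le]
      refine StrictMonoOn.union ?_ ?_ (isGreatest_Icc hc.1.le) (isLeast_Icc hc.2.le)
      · exact ih (hf.mono (Icc_subset_Icc_right hc.2.le)) fun x hx =>
          hd' x ⟨hx.1, hx.2.trans hc.2⟩ hx.2.ne
      · exact ih (hf.mono (Icc_subset_Icc_left hc.1.le)) fun x hx =>
          hd' x ⟨hc.1.trans hx.1, hx.2⟩ hx.1.ne'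
    · exact ih hf fun x hx => hd' x hx (ne_of_mem_of_not_mem hx hc)

theorem isPLHomeoMuLt_of_hasDerivAt {f : ℝ → ℝ} {ε : ℝ} (hf : ContinuousOn f (Icc 0 1))
    (hf₀ : f 0 = 0) (hf₁ : f 1 = 1) (s : Finset ℝ)
    (hd : ∀ x ∈ Icc (0 : ℝ) 1, x ∉ s → ∃ d, HasDerivAt f d x ∧ 0 < d ∧ |d - 1| < ε) :
    IsPLHomeoMuLt f ε := by
  have hmono : StrictMonoOn f (Icc 0 1) :=
    strictMonoOn_Icc_of_hasDerivAt_pos s hf fun x hx hxs =>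
      (hd x (Ioo_subset_Icc_self hx) hxs).imp fun _ h => ⟨h.1, h.2.1⟩
  have hsurj : SurjOn f (Icc 0 1) (Icc 0 1) := fun y hy =>
    intermediate_value_Icc zero_le_one hf (by rwa [hf₀, hf₁])
  refine ⟨⟨fun x hx => ?_, hmono.injOn, hsurj⟩, hmono,
    s, fun x hx hxs => (hd x hx hxs).imp fun _ h => ⟨h.1, h.2.2⟩⟩
  have hmono' := hmono.monotoneOn
  exact ⟨hf₀ ▸ hmono' (left_mem_Icc.2 zero_le_one) hx hx.1,
    hf₁ ▸ hmono' hx (right_mem_Icc.2 zero_le_one) hx.2⟩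

theorem hasDerivAt_max_sub_const_zero {c x : ℝ} (hx : x ≠ c) :
    HasDerivAt (fun y => max (y - c) 0) (if c < x then 1 else 0) x := by
  rcases hx.lt_or_gt with hxc | hcx
  · rw [if_neg hxc.not_gt]
    refine (hasDerivAt_const x 0).congr_of_eventuallyEq ?_
    filter_upwards [Iio_mem_nhds hxc] with y hy
    exact max_eq_right (by linarith [mem_Iio.1 hy])
  · rw [if_pos hcx]
    refine ((hasDerivAt_id x).sub_const c).congr_of_eventuallyEq ?_
    filter_upwards [Ioi_mem_nhds hcx] with y hy
    exact max_eq_left (by linarith [mem_Ioi.1 hy])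

/-- The piecewise linear map vanishing at `0` with slopes `s₁`, `s₂`, `s₃` on `(-∞, p]`, `[p, q]`
and `[q, ∞)`. -/
noncomputable def hingeMap (p q s₁ s₂ s₃ x : ℝ) : ℝ :=
  s₁ * x + (s₂ - s₁) * max (x - p) 0 + (s₃ - s₂) * max (x - q) 0

theorem continuous_hingeMap (p q s₁ s₂ s₃ : ℝ) : Continuous (hingeMap p q s₁ s₂ s₃) := by
  unfold hingeMap
  fun_prop

theorem hasDerivAt_hingeMap {p q s₁ s₂ s₃ x : ℝ} (hpq : p < q) (hxp : x ≠ p) (hxq : x ≠ q) :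
    HasDerivAt (hingeMap p q s₁ s₂ s₃) (if x < p then s₁ else if x < q then s₂ else s₃) x := by
  refine ((((hasDerivAt_id' x).const_mul s₁).add
    ((hasDerivAt_max_sub_const_zero hxp).const_mul (s₂ - s₁))).add
    ((hasDerivAt_max_sub_const_zero hxq).const_mul (s₃ - s₂))).congr_deriv ?_
  rcases lt_or_gt_of_ne hxp with hxp | hpx
  · simp [hxp, hxp.not_gt, (hxp.trans hpq).not_gt]
  · rcases lt_or_gt_of_ne hxq with hxq | hqx
    · simp [hpx.not_gt, hxq, hpx, hxq.not_gt]
    · simp [hpx.not_gt, hqx.not_gt, hpx, hqx]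

theorem exists_isPLHomeoMuLt_image_Icc_subset {ε p q u v : ℝ} (hp : 0 < p) (hpq : p < q)
    (hq : q < 1) (hu : 0 < u) (huv : u < v) (hv : v < 1) (h₁ : |u / p - 1| < ε)
    (h₂ : |(v - u) / (q - p) - 1| < ε) (h₃ : |(1 - v) / (1 - q) - 1| < ε) :
    ∃ φ, IsPLHomeoMuLt φ ε ∧ φ '' Icc p q ⊆ Icc u v := by
  set φ := hingeMap p q (u / p) ((v - u) / (q - p)) ((1 - v) / (1 - q))
  have hqp : q - p ≠ 0 := (sub_pos.2 hpq).ne'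
  have hq' : 1 - q ≠ 0 := (sub_pos.2 hq).ne'
  have hφ₀ : φ 0 = 0 := by
    simp [φ, hingeMap, hp.le, (hp.trans hpq).le]
  have hφp : φ p = u := by
    simp [φ, hingeMap, hpq.le, hp.ne']
  have hφq : φ q = v := by
    simp only [φ, hingeMap, sub_self, max_self, max_eq_left (sub_pos.2 hpq).le]
    field_simp
    ring
  have hφ₁ : φ 1 = 1 := by
    simp only [φ, hingeMap, max_eq_left (sub_pos.2 (hpq.trans hq)).le,
      max_eq_left (sub_pos.2 hq).le]
    field_simp
    ring
  have hφ : IsPLHomeoMuLt φ ε := by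
    refine isPLHomeoMuLt_of_hasDerivAt (continuous_hingeMap ..).continuousOn hφ₀ hφ₁ {p, q}
      fun x _ hx => ?_
    simp only [Finset.mem_insert, Finset.mem_singleton, not_or] at hx
    refine ⟨_, hasDerivAt_hingeMap hpq hx.1 hx.2, ?_⟩
    split_ifs
    · exact ⟨by positivity, h₁⟩
    · exact ⟨div_pos (by linarith) (by linarith), h₂⟩
    · exact ⟨div_pos (by linarith) (by linarith), h₃⟩
  refine ⟨φ, hφ, ?_⟩
  rintro _ ⟨x, hx, rfl⟩
  have hmono := hφ.2.1.monotoneOn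
  have hI : Icc p q ⊆ Icc 0 1 := Icc_subset_Icc hp.le hq.le
  exact ⟨hφp ▸ hmono (hI (left_mem_Icc.2 hpq.le)) (hI hx) hx.1,
    hφq ▸ hmono (hI hx) (hI (right_mem_Icc.2 hpq.le)) hx.2⟩

theorem isRegion_Icc {x y : ℝ} (h : x < y) : IsRegion (Icc x y) :=
  ⟨{(x, y)}, by simp, by simp [h], by simp, by simp⟩

theorem epsEquiv_Icc_of_subset {ε m p q u v : ℝ} (hε : 0 < ε) (hpu : p ≤ u) (huv : u < v)
    (hvq : v ≤ q) (hp : m ≤ p) (hqp : m ≤ q - p) (hq : m ≤ 1 - q)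
    (h : u - p + (q - v) < ε * m) : EpsEquiv ε (Icc u v) (Icc p q) := by
  have hm : 0 < m := pos_of_mul_pos_right (by linarith) hε.le
  have hεp := mul_le_mul_of_nonneg_left hp hε.le
  have hεqp := mul_le_mul_of_nonneg_left hqp hε.le
  have hεq := mul_le_mul_of_nonneg_left hq hε.le
  have hεm := mul_pos hε hm
  replace hp : 0 < p := by linarith
  replace hqp : 0 < q - p := by linarith
  replace hq : 0 < 1 - q := by linarith
  obtain ⟨ψ, hψ, hψI⟩ := exists_isPLHomeoMuLt_image_Icc_subset (ε := ε) (q := q) (u := u)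
    (v := v) hp (by linarith) (by linarith) (by linarith) huv (by linarith)
    (by rw [div_sub_one hp.ne', abs_lt, lt_div_iff₀ hp, div_lt_iff₀ hp]; constructor <;> linarith)
    (by rw [div_sub_one hqp.ne', abs_lt, lt_div_iff₀ hqp, div_lt_iff₀ hqp]
        constructor <;> linarith)
    (by rw [div_sub_one hq.ne', abs_lt, lt_div_iff₀ hq, div_lt_iff₀ hq]; constructor <;> linarith)
  have hid : IsPLHomeoMuLt id ε := isPLHomeoMuLt_of_hasDerivAt continuousOn_id rfl rfl ∅
    fun x _ _ => ⟨1, hasDerivAt_id x, one_pos, by simpa using hε⟩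
  exact ⟨id, ψ, hid, hψ, by simpa using Icc_subset_Icc hpu hvq, hψI⟩

theorem exists_nat_mul_eq_add_lt {x y δ : ℝ} (hx : 0 ≤ x) (hy : 0 ≤ y) (hδ : 0 < δ) :
    ∃ n : ℕ, ∃ α β : ℝ, 0 ≤ α ∧ 0 ≤ β ∧ n * α = x ∧ n * β = y ∧ α + β < δ := by
  obtain ⟨n, hn⟩ := exists_nat_gt ((x + y) / δ)
  have hn₀ : (0 : ℝ) < n := lt_of_le_of_lt (by positivity) hn
  refine ⟨n, x / n, y / n, by positivity, by positivity, mul_div_cancel₀ _ hn₀.ne',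
    mul_div_cancel₀ _ hn₀.ne', ?_⟩
  rwa [← add_div, div_lt_iff₀ hn₀, mul_comm, ← div_lt_iff₀ hδ]

theorem exists_monotone_eps_equivalent_sequence_general (a b c d : ℝ)
    (hab : a < b)
    (hKL : Set.Icc a b ⊆ Set.Icc c d)
    (hsub : Set.Icc c d ⊆ Set.Ioo (0:ℝ) 1)
    (ε : ℝ) (hε : 0 < ε) :
    ∃ i₀ : ℕ, ∃ M : ℕ → Set ℝ, M 0 = Set.Icc a b ∧ M i₀ = Set.Icc c d ∧
      (∀ i ≤ i₀, IsRegion (M i) ∧ M i ⊆ Set.Ioo (0:ℝ) 1) ∧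
      (∀ i < i₀, EpsEquiv ε (M i) (M (i + 1)) ∧ M i ⊆ M (i + 1)) := by
  have hca : c ≤ a := (hKL (left_mem_Icc.2 hab.le)).1
  have hbd : b ≤ d := (hKL (right_mem_Icc.2 hab.le)).2
  have hc : 0 < c := (hsub (left_mem_Icc.2 (by linarith))).1
  have hd : d < 1 := (hsub (right_mem_Icc.2 (by linarith))).2
  -- a lower bound for the left gap, the length and the right gap of every interval used
  set m := min c (min (1 - d) (b - a))
  have hmc : m ≤ c := min_le_left _ _
  have hmd : m ≤ 1 - d := (min_le_right _ _).trans (min_le_left _ _)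
  have hmab : m ≤ b - a := (min_le_right _ _).trans (min_le_right _ _)
  have hm : 0 < m := lt_min hc (lt_min (by linarith) (by linarith))
  obtain ⟨n, α, β, hα, hβ, hnα, hnβ, hαβ⟩ :=
    exists_nat_mul_eq_add_lt (sub_nonneg.2 hca) (sub_nonneg.2 hbd) (mul_pos hε hm)
  have hsteps : ∀ i : ℕ, i ≤ n → (i : ℝ) * α ≤ a - c ∧ (i : ℝ) * β ≤ d - b := fun i hi => by
    have hi : (i : ℝ) ≤ n := by exact_mod_cast hi
    exact ⟨hnα ▸ mul_le_mul_of_nonneg_right hi hα, hnβ ▸ mul_le_mul_of_nonneg_right hi hβ⟩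
  refine ⟨n, fun i => Icc (a - i * α) (b + i * β), by simp,
    by simp only [hnα, hnβ, sub_sub_cancel, add_sub_cancel], fun i hi => ?_, fun i hi => ?_⟩
  · obtain ⟨hα₀, hβ₀⟩ : 0 ≤ (i : ℝ) * α ∧ 0 ≤ (i : ℝ) * β := ⟨by positivity, by positivity⟩
    obtain ⟨hαi, hβi⟩ := hsteps i hi
    exact ⟨isRegion_Icc (by linarith), (Icc_subset_Icc (by linarith) (by linarith)).trans hsub⟩
  · obtain ⟨hα₀, hβ₀⟩ : 0 ≤ (i : ℝ) * α ∧ 0 ≤ (i : ℝ) * β := ⟨by positivity, by positivity⟩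
    obtain ⟨hαi, hβi⟩ := hsteps (i + 1) hi
    push_cast at hαi hβi ⊢
    exact ⟨epsEquiv_Icc_of_subset (m := m) hε (by linarith) (by linarith) (by linarith)
      (by linarith) (by linarith) (by linarith) (by linarith),
      Icc_subset_Icc (by linarith) (by linarith)⟩

theorem exists_monotone_eps_equivalent_sequence (a b c d : ℝ)
    (hab : a < b) (hcd : c < d)
    (hKL : Set.Icc a b ⊆ Set.Icc c d)
    (hsub : Set.Icc c d ⊆ Set.Ioo (0:ℝ) 1)
    (ε : ℝ) (hε : 0 < ε) :
    ∃ i₀ : ℕ, ∃ M : ℕ → Set ℝ, M 0 = Set.Icc a b ∧ M i₀ = Set.Icc c d ∧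
      (∀ i ≤ i₀, IsRegion (M i) ∧ M i ⊆ Set.Ioo (0:ℝ) 1) ∧
      (∀ i < i₀, EpsEquiv ε (M i) (M (i + 1)) ∧ M i ⊆ M (i + 1)) :=
  exists_monotone_eps_equivalent_sequence_general a b c d hab hKL hsub ε hε
end
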